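/- arXiv:2601.13552 — 6 statements merged into one kernel-verified Lean document; each statement's English description precedes it below -/
import Mathlib

section
/- Let C be a cycle of length s ≥ 3 in a finite simple graph G, and let u1, u2 be two distinct vertices of G not on C, each having at least one neighbor on C. Suppose that neither the set of neighbors of u1 on C nor the set of neighbors of u2 on C contains two consecutive vertices of C. If u1 and u2 have no common neighbor on C, then there exist a neighbor v1 of u1 on C and a neighbor v2 of u2 on C such that 1 ≤ dist_C(v1, v2) ≤ max{1, ⌊s/2⌋ + 2 − deg_C(u1) − deg_C(u2)}, where dist_C denotes graph distance along the cycle C and deg_C(u) denotes the number of neighbors of u on C. -/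
open SimpleGraph

namespace DeanAux

lemma hoff {s : ℕ} [NeZero s] (x y : ZMod s) (d : ℕ) (hd : d < s)
    (h : y = x + (d : ZMod s)) : (y - x).val = d := by
  rw [h, add_sub_cancel_left, ZMod.val_cast_of_lt hd]

lemma hrep {s : ℕ} [NeZero s] (x y : ZMod s) : y = x + (((y - x).val : ℕ) : ZMod s) := by
  rw [ZMod.natCast_val, ZMod.cast_id]; ring

lemma cast_split {s : ℕ} (d F : ℕ) (h : d ≤ F) :
    ((F : ℕ) : ZMod s) = (d : ZMod s) + ((F - d : ℕ) : ZMod s) := by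
  conv_lhs => rw [← Nat.add_sub_cancel' h]
  rw [Nat.cast_add]

lemma cast_pred {s : ℕ} (j : ℕ) (h : 1 ≤ j) :
    ((j : ℕ) : ZMod s) = ((j - 1 : ℕ) : ZMod s) + 1 := by
  conv_lhs => rw [← Nat.succ_pred_eq_of_pos h]
  rw [Nat.succ_eq_add_one, Nat.cast_add, Nat.cast_one, Nat.pred_eq_sub_one]

lemma core {s : ℕ} (hs : 3 ≤ s) (A B : Finset (ZMod s))
    (hA : A.Nonempty) (hB : B.Nonempty) (hdisj : Disjoint A B)
    (hAc : ∀ a ∈ A, a + 1 ∉ A) (hBc : ∀ b ∈ B, b + 1 ∉ B)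
    (M : ℕ) (hM1 : 1 ≤ M) (hM : s / 2 + 2 ≤ A.card + B.card + M) :
    ∃ a ∈ A, ∃ b ∈ B, (b - a).val ≤ M ∨ (a - b).val ≤ M := by
  haveI : NeZero s := ⟨by omega⟩
  haveI : Fact (1 < s) := ⟨by omega⟩
  by_contra hcon
  push_neg at hcon
  obtain ⟨as, hasA, hasmin⟩ := A.exists_min_image (fun a => B.inf' hB (fun b => (b - a).val)) hA
  obtain ⟨bs, hbsB, hbsmin⟩ := B.exists_min_image (fun b => (b - as).val) hB
  set F := (bs - as).val with hFdef
  have hfas : B.inf' hB (fun b => (b - as).val) = F :=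
    le_antisymm (Finset.inf'_le _ hbsB) (Finset.le_inf' _ _ hbsmin)
  have hFlt : F < s := ZMod.val_lt _
  have hFM : M < F := (hcon as hasA bs hbsB).1
  have hbs_eq : bs = as + ((F : ℕ) : ZMod s) := hrep as bs
  have hP2 : ∀ d, 1 ≤ d → d < F → as + (d : ZMod s) ∉ A := by
    intro d hd1 hdF ha
    have hbd : (bs - (as + (d : ZMod s))).val = F - d := by
      apply hoff _ _ _ (by omega)
      rw [hbs_eq, cast_split d F hdF.le, ← add_assoc]
    have h1 : B.inf' hB (fun b => (b - (as + (d : ZMod s))).val) ≤ F - d :=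
      hbd ▸ Finset.inf'_le _ hbsB
    have h2 := hasmin _ ha
    simp only [hfas] at h2
    omega
  have hP3 : ∀ d, 1 ≤ d → d < F → as + (d : ZMod s) ∉ B := by
    intro d hd1 hdF hb
    have h1 : (as + (d : ZMod s) - as).val = d := hoff _ _ _ (by omega) rfl
    have h2 := hbsmin _ hb
    rw [h1] at h2
    omega
  obtain ⟨bo, hboB, hbomin⟩ := B.exists_min_image (fun b => A.inf' hA (fun a => (a - b).val)) hB
  obtain ⟨ao, haoA, haomin⟩ := A.exists_min_image (fun a => (a - bo).val) hA
  set Gg := (ao - bo).val with hGdef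
  have hgbo : A.inf' hA (fun a => (a - bo).val) = Gg :=
    le_antisymm (Finset.inf'_le _ haoA) (Finset.le_inf' _ _ haomin)
  have hGlt : Gg < s := ZMod.val_lt _
  have hGM : M < Gg := (hcon ao haoA bo hboB).2
  have hao_eq : ao = bo + ((Gg : ℕ) : ZMod s) := hrep bo ao
  have hQ2 : ∀ d, 1 ≤ d → d < Gg → bo + (d : ZMod s) ∉ B := by
    intro d hd1 hdF hb
    have hbd : (ao - (bo + (d : ZMod s))).val = Gg - d := by
      apply hoff _ _ _ (by omega)
      rw [hao_eq, cast_split d Gg hdF.le, ← add_assoc]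
    have h1 : A.inf' hA (fun a => (a - (bo + (d : ZMod s))).val) ≤ Gg - d :=
      hbd ▸ Finset.inf'_le _ haoA
    have h2 := hbomin _ hb
    simp only [hgbo] at h2
    omega
  have hQ3 : ∀ d, 1 ≤ d → d < Gg → bo + (d : ZMod s) ∉ A := by
    intro d hd1 hdF ha
    have h1 : (bo + (d : ZMod s) - bo).val = d := hoff _ _ _ (by omega) rfl
    have h2 := haomin _ ha
    rw [h1] at h2
    omega
  have hone : ((1 : ZMod s)).val = 1 := ZMod.val_one s
  have hne_add_one : ∀ x : ZMod s, x ≠ x + 1 := by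
    intro x h
    have h2 : (x + 1 - x).val = 1 := by rw [add_sub_cancel_left, hone]
    rw [← h] at h2
    simp at h2
  set A2 := A.biUnion (fun a => {a, a + 1}) with hA2def
  set B2 := B.biUnion (fun b => {b, b + 1}) with hB2def
  set I1 := (Finset.Icc 2 (F - 1)).image (fun j : ℕ => as + (j : ZMod s)) with hI1def
  set I2 := (Finset.Icc 2 (Gg - 1)).image (fun j : ℕ => bo + (j : ZMod s)) with hI2def
  have hmemA2 : ∀ v, v ∈ A2 → ∃ a ∈ A, v = a ∨ v = a + 1 := by
    intro v hv
    simp only [hA2def, Finset.mem_biUnion, Finset.mem_insert, Finset.mem_singleton] at hv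
    obtain ⟨a, ha, h⟩ := hv
    exact ⟨a, ha, h⟩
  have hmemB2 : ∀ v, v ∈ B2 → ∃ b ∈ B, v = b ∨ v = b + 1 := by
    intro v hv
    simp only [hB2def, Finset.mem_biUnion, Finset.mem_insert, Finset.mem_singleton] at hv
    obtain ⟨b, hb, h⟩ := hv
    exact ⟨b, hb, h⟩
  have hmemI1 : ∀ v, v ∈ I1 → ∃ j, 2 ≤ j ∧ j ≤ F - 1 ∧ v = as + (j : ZMod s) := by
    intro v hv
    simp only [hI1def, Finset.mem_image, Finset.mem_Icc] at hv
    obtain ⟨j, ⟨h1, h2⟩, h3⟩ := hv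
    exact ⟨j, h1, h2, h3.symm⟩
  have hmemI2 : ∀ v, v ∈ I2 → ∃ j, 2 ≤ j ∧ j ≤ Gg - 1 ∧ v = bo + (j : ZMod s) := by
    intro v hv
    simp only [hI2def, Finset.mem_image, Finset.mem_Icc] at hv
    obtain ⟨j, ⟨h1, h2⟩, h3⟩ := hv
    exact ⟨j, h1, h2, h3.symm⟩
  have hcard_pair : ∀ x : ZMod s, ({x, x + 1} : Finset (ZMod s)).card = 2 := by
    intro x
    exact Finset.card_pair (hne_add_one x)
  have hpair_disj : ∀ (S : Finset (ZMod s)), (∀ a ∈ S, a + 1 ∉ S) →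
      ∀ a ∈ S, ∀ b ∈ S, a ≠ b →
        Disjoint ({a, a + 1} : Finset (ZMod s)) {b, b + 1} := by
    intro S hSc a ha b hb hab
    simp only [Finset.disjoint_left, Finset.mem_insert, Finset.mem_singleton]
    rintro x (h1 | h1) (h2 | h2)
    · exact hab (h1.symm.trans h2)
    · have h3 : a = b + 1 := h1.symm.trans h2
      exact hSc b hb (h3 ▸ ha)
    · have h3 : b = a + 1 := h2.symm.trans h1
      exact hSc a ha (h3 ▸ hb)
    · exact hab (add_right_cancel ((h1.symm.trans h2 : (a + 1 : ZMod s) = b + 1)))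
  have hcardA2 : A2.card = 2 * A.card := by
    rw [hA2def, Finset.card_biUnion (hpair_disj A hAc)]
    rw [Finset.sum_congr rfl (fun x _ => hcard_pair x), Finset.sum_const, smul_eq_mul, mul_comm]
  have hcardB2 : B2.card = 2 * B.card := by
    rw [hB2def, Finset.card_biUnion (hpair_disj B hBc)]
    rw [Finset.sum_congr rfl (fun x _ => hcard_pair x), Finset.sum_const, smul_eq_mul, mul_comm]
  have hinj : ∀ (z : ZMod s) (lo hi : ℕ), hi < s →
      Set.InjOn (fun j : ℕ => z + (j : ZMod s)) (Finset.Icc lo hi) := by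
    intro z lo hi hhi j hj j' hj' h
    simp only [Finset.coe_Icc, Set.mem_Icc] at hj hj'
    have h0 := add_left_cancel h
    have h1 : ((j : ZMod s)).val = ((j' : ZMod s)).val := by rw [h0]
    rwa [ZMod.val_cast_of_lt (by omega), ZMod.val_cast_of_lt (by omega)] at h1
  have hcardI1 : I1.card = F - 2 := by
    rw [hI1def, Finset.card_image_of_injOn (hinj as 2 (F - 1) (by omega)), Nat.card_Icc]
    omega
  have hcardI2 : I2.card = Gg - 2 := by
    rw [hI2def, Finset.card_image_of_injOn (hinj bo 2 (Gg - 1) (by omega)), Nat.card_Icc]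
    omega
  have hval1 : ∀ x y : ZMod s, y = x + 1 → (y - x).val = 1 := by
    intro x y h
    rw [h, add_sub_cancel_left, hone]
  have hdAB : Disjoint A2 B2 := by
    rw [Finset.disjoint_left]
    intro v hvA hvB
    obtain ⟨a, ha, hva⟩ := hmemA2 v hvA
    obtain ⟨b, hb, hvb⟩ := hmemB2 v hvB
    have hdab := hcon a ha b hb
    rcases hva with h' | h' <;> rcases hvb with h | h
    · have h2 : a = b := h'.symm.trans h
      exact Finset.disjoint_left.mp hdisj ha (h2 ▸ hb)
    · have := hval1 b a (h.symm.trans h').symm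
      omega
    · have := hval1 a b (h'.symm.trans h).symm
      omega
    · have h2 : a = b := add_right_cancel ((h'.symm.trans h : (a + 1 : ZMod s) = b + 1))
      exact Finset.disjoint_left.mp hdisj ha (h2 ▸ hb)
  have hdI1A2 : Disjoint I1 A2 := by
    rw [Finset.disjoint_left]
    intro v hvI hvA
    obtain ⟨j, hj2, hjF, rfl⟩ := hmemI1 v hvI
    obtain ⟨a, ha, hva⟩ := hmemA2 _ hvA
    rcases hva with h | h
    · exact hP2 j (by omega) (by omega) (h ▸ ha)
    · have h3 : a = as + ((j - 1 : ℕ) : ZMod s) := by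
        rw [cast_pred j (by omega), ← add_assoc] at h
        exact (add_right_cancel h).symm
      exact hP2 (j - 1) (by omega) (by omega) (h3 ▸ ha)
  have hdI1B2 : Disjoint I1 B2 := by
    rw [Finset.disjoint_left]
    intro v hvI hvB
    obtain ⟨j, hj2, hjF, rfl⟩ := hmemI1 v hvI
    obtain ⟨b, hb, hvb⟩ := hmemB2 _ hvB
    rcases hvb with h | h
    · exact hP3 j (by omega) (by omega) (h ▸ hb)
    · have h3 : b = as + ((j - 1 : ℕ) : ZMod s) := by
        rw [cast_pred j (by omega), ← add_assoc] at h
        exact (add_right_cancel h).symm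
      exact hP3 (j - 1) (by omega) (by omega) (h3 ▸ hb)
  have hdI2B2 : Disjoint I2 B2 := by
    rw [Finset.disjoint_left]
    intro v hvI hvB
    obtain ⟨j, hj2, hjF, rfl⟩ := hmemI2 v hvI
    obtain ⟨b, hb, hvb⟩ := hmemB2 _ hvB
    rcases hvb with h | h
    · exact hQ2 j (by omega) (by omega) (h ▸ hb)
    · have h3 : b = bo + ((j - 1 : ℕ) : ZMod s) := by
        rw [cast_pred j (by omega), ← add_assoc] at h
        exact (add_right_cancel h).symm
      exact hQ2 (j - 1) (by omega) (by omega) (h3 ▸ hb)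
  have hdI2A2 : Disjoint I2 A2 := by
    rw [Finset.disjoint_left]
    intro v hvI hvA
    obtain ⟨j, hj2, hjF, rfl⟩ := hmemI2 v hvI
    obtain ⟨a, ha, hva⟩ := hmemA2 _ hvA
    rcases hva with h | h
    · exact hQ3 j (by omega) (by omega) (h ▸ ha)
    · have h3 : a = bo + ((j - 1 : ℕ) : ZMod s) := by
        rw [cast_pred j (by omega), ← add_assoc] at h
        exact (add_right_cancel h).symm
      exact hQ3 (j - 1) (by omega) (by omega) (h3 ▸ ha)
  have hdI1I2 : Disjoint I1 I2 := by
    rw [Finset.disjoint_left]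
    intro v hvI hvJ
    obtain ⟨j, hj2, hjF, hv1⟩ := hmemI1 v hvI
    obtain ⟨j', hj2', hjG, hv2⟩ := hmemI2 v hvJ
    have hx : as + ((j : ℕ) : ZMod s) = bo + ((j' : ℕ) : ZMod s) := hv1 ▸ hv2
    rcases lt_trichotomy (F - j) (Gg - j') with h | h | h
    · have key : bs = bo + ((j' + (F - j) : ℕ) : ZMod s) := by
        rw [hbs_eq, cast_split j F (by omega), ← add_assoc, hx, add_assoc, ← Nat.cast_add]
      exact hQ2 (j' + (F - j)) (by omega) (by omega) (key ▸ hbsB)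
    · have key : bs = ao := by
        rw [hbs_eq, hao_eq, cast_split j F (by omega), cast_split j' Gg (by omega),
          ← add_assoc, ← add_assoc, hx, h]
      exact Finset.disjoint_left.mp hdisj haoA (key ▸ hbsB)
    · have key : ao = as + ((j + (Gg - j') : ℕ) : ZMod s) := by
        rw [hao_eq, cast_split j' Gg (by omega), ← add_assoc, ← hx, add_assoc, ← Nat.cast_add]
      exact hP2 (j + (Gg - j')) (by omega) (by omega) (key ▸ haoA)
  have hcount : A2.card + B2.card + I1.card + I2.card ≤ s := by
    have h1 : (A2 ∪ B2 ∪ I1 ∪ I2).card ≤ Fintype.card (ZMod s) := Finset.card_le_univ _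
    rw [ZMod.card] at h1
    rw [Finset.card_union_of_disjoint, Finset.card_union_of_disjoint,
      Finset.card_union_of_disjoint hdAB] at h1
    · omega
    · rw [Finset.disjoint_union_left]
      exact ⟨hdI1A2.symm, hdI1B2.symm⟩
    · rw [Finset.disjoint_union_left, Finset.disjoint_union_left]
      exact ⟨⟨hdI2A2.symm, hdI2B2.symm⟩, hdI1I2⟩
  omega

end DeanAux

namespace Dean

variable {V : Type*}

noncomputable def degN (G : SimpleGraph V) (v : V) : ℕ := (G.neighborSet v).ncard

def HasCycleMod (G : SimpleGraph V) (k : ℕ) (r : ℤ) : Prop :=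
  ∃ (v : V) (c : G.Walk v v), c.IsCycle ∧ (k : ℤ) ∣ ((c.length : ℤ) - r)

def HasConsecutiveCycles (G : SimpleGraph V) (k : ℕ) : Prop :=
  ∃ a : ℕ, ∀ i < k, ∃ (v : V) (c : G.Walk v v), c.IsCycle ∧ c.length = a + i

def HasAdmissibleCycles (G : SimpleGraph V) (k : ℕ) : Prop :=
  ∃ a d : ℕ, (d = 1 ∨ d = 2) ∧
    ∀ i < k, ∃ (v : V) (c : G.Walk v v), c.IsCycle ∧ c.length = a + d * i

/-- `HGraph k n t` : complete bipartite `K_{k,n}` minus `k - t` edges at the vertex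
`Sum.inr 0` of the part of size `n`, so that this vertex keeps exactly `t` neighbours. -/
def HGraph (k n t : ℕ) : SimpleGraph (Fin k ⊕ Fin n) :=
  SimpleGraph.fromRel fun x y =>
    ∃ (i : Fin k) (j : Fin n), x = Sum.inl i ∧ y = Sum.inr j ∧ (j.val ≠ 0 ∨ i.val < t)

def IsKkplus1 (k : ℕ) (G : SimpleGraph V) : Prop :=
  Nonempty (G ≃g completeGraph (Fin (k + 1)))

def IsKkk (k : ℕ) (G : SimpleGraph V) : Prop :=
  Nonempty (G ≃g completeBipartiteGraph (Fin k) (Fin k))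

def IsHGraph (k : ℕ) (G : SimpleGraph V) : Prop :=
  ∃ n t, 2 ≤ t ∧ t ≤ k ∧ k < n ∧ Nonempty (G ≃g HGraph k n t)

def IsExceptional (k : ℕ) (G : SimpleGraph V) : Prop :=
  IsKkplus1 k G ∨ IsKkk k G ∨ IsHGraph k G

def IsBipExceptional (k : ℕ) (G : SimpleGraph V) : Prop :=
  IsKkk k G ∨ IsHGraph k G

def IsCutVertex (G : SimpleGraph V) (v : V) : Prop :=
  ∃ (a b : V) (ha : a ≠ v) (hb : b ≠ v), G.Reachable a b ∧
    ¬ (G.induce {u : V | u ≠ v}).Reachable ⟨a, ha⟩ ⟨b, hb⟩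

def NoCutVtxIn (G : SimpleGraph V) (B : Set V) : Prop :=
  ∀ v ∈ B, B = {v} ∨ (G.induce (B \ {v})).Connected

def IsBlockSet (G : SimpleGraph V) (B : Set V) : Prop :=
  (G.induce B).Connected ∧ NoCutVtxIn G B ∧
    ∀ B' : Set V, B ⊆ B' → (G.induce B').Connected → NoCutVtxIn G B' → B' = B

def IsEndBlock (G : SimpleGraph V) (B : Set V) : Prop :=
  IsBlockSet G B ∧ {v | v ∈ B ∧ IsCutVertex G v}.Subsingleton

def IsThreeConnected (G : SimpleGraph V) : Prop :=
  4 ≤ Nat.card V ∧ ∀ S : Set V, S.ncard ≤ 2 → (G.induce (Sᶜ : Set V)).Connected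

def IsTwoConnected (G : SimpleGraph V) : Prop :=
  3 ≤ Nat.card V ∧ ∀ v : V, (G.induce ({v}ᶜ : Set V)).Connected

def TypeOne (k : ℕ) (G : SimpleGraph V) : Prop :=
  IsThreeConnected G ∧ {v : V | degN G v < k}.Subsingleton

/-- the graph `G - θ + θ₁θ₂`. -/
def modGraph (G : SimpleGraph V) (θ θ₁ θ₂ : V) (h₁ : θ₁ ≠ θ) (h₂ : θ₂ ≠ θ) :
    SimpleGraph ↥{u : V | u ≠ θ} :=
  (G.induce {u : V | u ≠ θ}) ⊔ SimpleGraph.fromEdgeSet {s(⟨θ₁, h₁⟩, ⟨θ₂, h₂⟩)}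

def TypeTwo (k : ℕ) (G : SimpleGraph V) (θ θ₁ θ₂ : V) : Prop :=
  degN G θ = 2 ∧ (∀ v, degN G v = 2 → v = θ) ∧
  G.Adj θ θ₁ ∧ G.Adj θ θ₂ ∧ θ₁ ≠ θ₂ ∧
  ∃ (h₁ : θ₁ ≠ θ) (h₂ : θ₂ ≠ θ),
    IsThreeConnected (modGraph G θ θ₁ θ₂ h₁ h₂) ∧
    ∀ v, k ≤ degN (modGraph G θ θ₁ θ₂ h₁ h₂) v

def IsKWeak (k : ℕ) (G : SimpleGraph V) : Prop :=
  TypeOne k G ∨ ∃ θ θ₁ θ₂, TypeTwo k G θ θ₁ θ₂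

inductive IsTrigonal : SimpleGraph V → SimpleGraph V → Set V → Prop
  | base (a b c : V) (hab : a ≠ b) (hbc : b ≠ c) (hac : a ≠ c) :
      IsTrigonal (SimpleGraph.fromEdgeSet {s(a, b), s(b, c), s(a, c)})
        (SimpleGraph.fromEdgeSet {s(a, b), s(b, c), s(a, c)}) {a, b, c}
  | extend (T B : SimpleGraph V) (S : Set V) (a b x : V)
      (h : IsTrigonal T B S) (hx : x ∉ S) (hab : B.Adj a b) :
      IsTrigonal (T ⊔ SimpleGraph.fromEdgeSet {s(a, x), s(x, b)})
        (B.deleteEdges {s(a, b)} ⊔ SimpleGraph.fromEdgeSet {s(a, x), s(x, b)})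
        (insert x S)

inductive IsTetragonal : SimpleGraph V → SimpleGraph V → Set V → Prop
  | base (a b c d : V) (hab : a ≠ b) (hac : a ≠ c) (had : a ≠ d)
      (hbc : b ≠ c) (hbd : b ≠ d) (hcd : c ≠ d) :
      IsTetragonal (SimpleGraph.fromEdgeSet {s(a, b), s(b, c), s(c, d), s(d, a)})
        (SimpleGraph.fromEdgeSet {s(a, b), s(b, c), s(c, d), s(d, a)}) {a, b, c, d}
  | extend (T B : SimpleGraph V) (S : Set V) (a b x y : V)
      (h : IsTetragonal T B S) (hx : x ∉ S) (hy : y ∉ S) (hxy : x ≠ y) (hab : B.Adj a b) :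
      IsTetragonal (T ⊔ SimpleGraph.fromEdgeSet {s(a, x), s(x, y), s(y, b)})
        (B.deleteEdges {s(a, b)} ⊔ SimpleGraph.fromEdgeSet {s(a, x), s(x, y), s(y, b)})
        (insert x (insert y S))

def IsTetragonalSubgraph (G T B : SimpleGraph V) (S : Set V) : Prop :=
  IsTetragonal T B S ∧ T ≤ G

def IsOptimalTetragonal (G T B : SimpleGraph V) (S : Set V) : Prop :=
  IsTetragonalSubgraph G T B S ∧
  (∀ (T' B' : SimpleGraph V) (S' : Set V),
    IsTetragonalSubgraph G T' B' S' → S'.ncard ≤ S.ncard) ∧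
  (∀ (T' B' : SimpleGraph V) (S' : Set V),
    IsTetragonalSubgraph G T' B' S' → S'.ncard = S.ncard →
      (G.induce S').edgeSet.ncard ≤ (G.induce S).edgeSet.ncard)


/-- Lemma 2.4 (1): close neighbours on a cycle, disjoint-neighbourhood case. -/
theorem short_dist_disjoint {V : Type*} [Fintype V] (G : SimpleGraph V) (s : ℕ) (hs : 3 ≤ s)
    (x : V) (c : G.Walk x x) (hc : c.IsCycle) (hlen : c.length = s)
    (u₁ u₂ : V) (hne : u₁ ≠ u₂) (hu₁ : u₁ ∉ c.support) (hu₂ : u₂ ∉ c.support)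
    (hd₁ : 0 < (G.neighborSet u₁ ∩ {v | v ∈ c.support}).ncard)
    (hd₂ : 0 < (G.neighborSet u₂ ∩ {v | v ∈ c.support}).ncard)
    (hcons₁ : ∀ v w : V, G.Adj u₁ v → G.Adj u₁ w → ¬ c.toSubgraph.spanningCoe.Adj v w)
    (hcons₂ : ∀ v w : V, G.Adj u₂ v → G.Adj u₂ w → ¬ c.toSubgraph.spanningCoe.Adj v w)
    (hdisj : G.neighborSet u₁ ∩ G.neighborSet u₂ ∩ {v | v ∈ c.support} = ∅) :
    ∃ v₁ v₂ : V, v₁ ∈ c.support ∧ v₂ ∈ c.support ∧ G.Adj u₁ v₁ ∧ G.Adj u₂ v₂ ∧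
      1 ≤ c.toSubgraph.spanningCoe.dist v₁ v₂ ∧
      (c.toSubgraph.spanningCoe.dist v₁ v₂ : ℤ) ≤
        max 1 (((s / 2 : ℕ) : ℤ) + 2
          - ((G.neighborSet u₁ ∩ {v | v ∈ c.support}).ncard : ℤ)
          - ((G.neighborSet u₂ ∩ {v | v ∈ c.support}).ncard : ℤ)) := by
  classical
  haveI : NeZero s := ⟨by omega⟩
  set G' := c.toSubgraph.spanningCoe with hG'
  set φ : ZMod s → V := fun i => c.getVert i.val with hφ
  have hadj : ∀ i : ZMod s, G'.Adj (φ i) (φ (i + 1)) := by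
    intro i
    have hiv : i.val < s := ZMod.val_lt i
    haveI : Fact (1 < s) := ⟨by omega⟩
    have hone : ((1 : ZMod s)).val = 1 := ZMod.val_one s
    by_cases h : i.val + 1 < s
    · have h1 : (i + 1).val = i.val + 1 := by
        rw [ZMod.val_add_of_lt (by rw [hone]; omega), hone]
      show c.toSubgraph.Adj (c.getVert i.val) (c.getVert (i + 1).val)
      rw [h1]
      exact c.toSubgraph_adj_getVert (by omega)
    · have h2 : i.val = s - 1 := by omega
      have h3 : i + 1 = 0 := by
        have h4 : i = (((s - 1 : ℕ)) : ZMod s) := by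
          apply ZMod.val_injective
          rw [ZMod.val_cast_of_lt (by omega), h2]
        rw [h4, show ((s - 1 : ℕ) : ZMod s) + 1 = ((s - 1 + 1 : ℕ) : ZMod s) by push_cast; ring,
          Nat.sub_add_cancel (by omega), ZMod.natCast_self]
      rw [h3]
      show c.toSubgraph.Adj (c.getVert i.val) (c.getVert (0 : ZMod s).val)
      have h5 : c.getVert (0 : ZMod s).val = c.getVert s := by
        rw [ZMod.val_zero, Walk.getVert_zero, ← hlen, Walk.getVert_length]
      rw [h5, h2, show s = s - 1 + 1 by omega]
      exact c.toSubgraph_adj_getVert (by omega)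
  have hwalk : ∀ (k : ℕ) (i : ZMod s), ∃ w : G'.Walk (φ i) (φ (i + (k : ZMod s))), w.length = k := by
    intro k
    induction k with
    | zero =>
      intro i
      exact ⟨Walk.nil.copy rfl (by rw [Nat.cast_zero, add_zero]), by simp⟩
    | succ k ih =>
      intro i
      obtain ⟨w, hw⟩ := ih i
      refine ⟨(w.concat (hadj (i + (k : ZMod s)))).copy rfl (by push_cast; ring_nf), ?_⟩
      rw [Walk.length_copy, Walk.length_concat, hw]
  have hrepr : ∀ i j : ZMod s, i + (((j - i).val : ℕ) : ZMod s) = j := by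
    intro i j
    rw [ZMod.natCast_val, ZMod.cast_id]
    ring
  have hdistle : ∀ i j : ZMod s, G'.dist (φ i) (φ j) ≤ (j - i).val := by
    intro i j
    obtain ⟨w, hw⟩ := hwalk ((j - i).val) i
    have := SimpleGraph.dist_le (w.copy rfl (congrArg φ (hrepr i j)))
    rwa [Walk.length_copy, hw] at this
  have hreach : ∀ i j : ZMod s, G'.Reachable (φ i) (φ j) := by
    intro i j
    obtain ⟨w, _⟩ := hwalk ((j - i).val) i
    exact ⟨w.copy rfl (congrArg φ (hrepr i j))⟩
  have hφsupp : ∀ i : ZMod s, φ i ∈ c.support := by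
    intro i
    exact Walk.mem_support_iff_exists_getVert.mpr ⟨i.val, rfl, by rw [hlen]; exact (ZMod.val_lt i).le⟩
  have hsurj : ∀ v ∈ c.support, ∃ i : ZMod s, φ i = v := by
    intro v hv
    obtain ⟨n, hn, hnl⟩ := Walk.mem_support_iff_exists_getVert.mp hv
    rw [hlen] at hnl
    by_cases h : n < s
    · exact ⟨(n : ZMod s), by rw [hφ]; simp only; rw [ZMod.val_cast_of_lt h, hn]⟩
    · have h2 : n = s := by omega
      refine ⟨0, ?_⟩
      rw [hφ]; simp only
      rw [ZMod.val_zero, Walk.getVert_zero, ← hn, h2, ← hlen, Walk.getVert_length]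
  set A : Finset (ZMod s) := Finset.univ.filter (fun i => G.Adj u₁ (φ i)) with hAdef
  set B : Finset (ZMod s) := Finset.univ.filter (fun i => G.Adj u₂ (φ i)) with hBdef
  set d₁ := (G.neighborSet u₁ ∩ {v | v ∈ c.support}).ncard with hd1def
  set d₂ := (G.neighborSet u₂ ∩ {v | v ∈ c.support}).ncard with hd2def
  have hAne : A.Nonempty := by
    obtain ⟨v, hv⟩ := Set.nonempty_of_ncard_ne_zero
      (s := G.neighborSet u₁ ∩ {v | v ∈ c.support}) (by omega)
    obtain ⟨i, hi⟩ := hsurj v hv.2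
    exact ⟨i, Finset.mem_filter.mpr ⟨Finset.mem_univ i, hi ▸ hv.1⟩⟩
  have hBne : B.Nonempty := by
    obtain ⟨v, hv⟩ := Set.nonempty_of_ncard_ne_zero
      (s := G.neighborSet u₂ ∩ {v | v ∈ c.support}) (by omega)
    obtain ⟨i, hi⟩ := hsurj v hv.2
    exact ⟨i, Finset.mem_filter.mpr ⟨Finset.mem_univ i, hi ▸ hv.1⟩⟩
  have hd1le : d₁ ≤ A.card := by
    have hsub : G.neighborSet u₁ ∩ {v | v ∈ c.support} ⊆ φ '' (A : Set (ZMod s)) := by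
      intro v hv
      obtain ⟨i, hi⟩ := hsurj v hv.2
      exact ⟨i, Finset.mem_coe.mpr (Finset.mem_filter.mpr ⟨Finset.mem_univ i, hi ▸ hv.1⟩), hi⟩
    calc d₁ ≤ (φ '' (A : Set (ZMod s))).ncard :=
          Set.ncard_le_ncard hsub ((A.finite_toSet).image φ)
      _ ≤ (A : Set (ZMod s)).ncard := Set.ncard_image_le (A.finite_toSet)
      _ = A.card := Set.ncard_coe_finset A
  have hd2le : d₂ ≤ B.card := by
    have hsub : G.neighborSet u₂ ∩ {v | v ∈ c.support} ⊆ φ '' (B : Set (ZMod s)) := by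
      intro v hv
      obtain ⟨i, hi⟩ := hsurj v hv.2
      exact ⟨i, Finset.mem_coe.mpr (Finset.mem_filter.mpr ⟨Finset.mem_univ i, hi ▸ hv.1⟩), hi⟩
    calc d₂ ≤ (φ '' (B : Set (ZMod s))).ncard :=
          Set.ncard_le_ncard hsub ((B.finite_toSet).image φ)
      _ ≤ (B : Set (ZMod s)).ncard := Set.ncard_image_le (B.finite_toSet)
      _ = B.card := Set.ncard_coe_finset B
  have hABdisj : Disjoint A B := by
    rw [Finset.disjoint_left]
    intro i hiA hiB
    have h1 := (Finset.mem_filter.mp hiA).2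
    have h2 := (Finset.mem_filter.mp hiB).2
    exact Set.eq_empty_iff_forall_notMem.mp hdisj (φ i) ⟨⟨h1, h2⟩, hφsupp i⟩
  have hAc : ∀ a ∈ A, a + 1 ∉ A := by
    intro a ha ha'
    exact hcons₁ (φ a) (φ (a + 1)) (Finset.mem_filter.mp ha).2 (Finset.mem_filter.mp ha').2
      (hadj a)
  have hBc : ∀ b ∈ B, b + 1 ∉ B := by
    intro b hb hb'
    exact hcons₂ (φ b) (φ (b + 1)) (Finset.mem_filter.mp hb).2 (Finset.mem_filter.mp hb').2
      (hadj b)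
  set M : ℕ := max 1 (s / 2 + 2 - A.card - B.card) with hMdef
  have hM1 : 1 ≤ M := le_max_left _ _
  have hMge : s / 2 + 2 - A.card - B.card ≤ M := le_max_right _ _
  have hMch : M = 1 ∨ M = s / 2 + 2 - A.card - B.card := max_choice _ _
  obtain ⟨a, haA, b, hbB, hab⟩ := DeanAux.core hs A B hAne hBne hABdisj hAc hBc M hM1 (by omega)
  have hadj1 : G.Adj u₁ (φ a) := (Finset.mem_filter.mp haA).2
  have hadj2 : G.Adj u₂ (φ b) := (Finset.mem_filter.mp hbB).2
  have hMdist : G'.dist (φ a) (φ b) ≤ M := by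
    rcases hab with h | h
    · exact le_trans (hdistle a b) h
    · rw [SimpleGraph.dist_comm]
      exact le_trans (hdistle b a) h
  have hnev : φ a ≠ φ b := by
    intro h
    exact Set.eq_empty_iff_forall_notMem.mp hdisj (φ a) ⟨⟨hadj1, h ▸ hadj2⟩, hφsupp a⟩
  have hdpos : 1 ≤ G'.dist (φ a) (φ b) := by
    rcases Nat.eq_zero_or_pos (G'.dist (φ a) (φ b)) with h | h
    · rcases SimpleGraph.dist_eq_zero_iff_eq_or_not_reachable.mp h with h' | h'
      · exact absurd h' hnev
      · exact absurd (hreach a b) h'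
    · omega
  refine ⟨φ a, φ b, hφsupp a, hφsupp b, hadj1, hadj2, hdpos, ?_⟩
  rcases max_cases (1 : ℤ) (((s / 2 : ℕ) : ℤ) + 2 - (d₁ : ℤ) - (d₂ : ℤ)) with ⟨he, hge⟩ | ⟨he, hge⟩ <;>
    rw [he] <;> omega


end Dean
end

section
/- Let C be a cycle of length s ≥ 3 in a finite simple graph G, and let u1, u2 be two distinct vertices of G not on C, each having at least one neighbor on C. Suppose that neither the set of neighbors of u1 on C nor the set of neighbors of u2 on C contains two consecutive vertices of C. If deg_C(u1) ≥ 2, then there exist a neighbor v1 of u1 on C and a neighbor v2 of u2 on C such that 1 ≤ dist_C(v1, v2) ≤ max{3, s/deg_C(u1), ⌊s/2⌋ + 3 − deg_C(u1) − deg_C(u2)}, where dist_C denotes graph distance along the cycle C and deg_C(u) denotes the number of neighbors of u on C. -/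
open SimpleGraph

namespace Dean

variable {V : Type*}

/-!
Index the cycle by `ZMod s`; let `A`, `B` be the positions of the neighbours of `u₁`, `u₂` and `D`
the least distance between distinct `a ∈ A`, `b ∈ B`. Going once around the cycle, the gaps
between consecutive points of `A ∪ B` add up to `s`. Every gap is at least `2`, as neither `A` nor
`B` contains consecutive positions, and the gap following a point of `A ∩ B`, or a point of `A`
followed by one of `B` (or vice versa), is at least `D`. If `A = B` all `|A|` gaps are long, so
`D |A| ≤ s`. Otherwise at least `max 2 (|A ∩ B| + 1)` of the `|A| + |B| - |A ∩ B|` gaps are long,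
which for `D ≥ 4` gives `2 (|A| + |B| + D) ≤ s + 6`. Instead of sorting `A ∪ B`, the bound on the
total length of the gaps is obtained by packing disjoint forward arcs.
-/

open Finset

section CyclicPacking

variable {n : ℕ}

def longGapStarts (D : ℕ) (P : Finset (ZMod n)) : Finset (ZMod n) :=
  {p ∈ P | ∀ q ∈ P, q ≠ p → D ≤ (q - p).val}

def CyclicallySeparated (D : ℕ) (A B : Finset (ZMod n)) : Prop :=
  ∀ a ∈ A, ∀ b ∈ B, a ≠ b → D ≤ (b - a).val ∧ D ≤ (a - b).val

lemma mem_longGapStarts {D : ℕ} {P : Finset (ZMod n)} {p : ZMod n} :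
    p ∈ longGapStarts D P ↔ p ∈ P ∧ ∀ q ∈ P, q ≠ p → D ≤ (q - p).val :=
  mem_filter

lemma CyclicallySeparated.inter_subset_longGapStarts {D : ℕ} {A B : Finset (ZMod n)}
    (hsep : CyclicallySeparated D A B) : A ∩ B ⊆ longGapStarts D (A ∪ B) := by
  intro p hp
  rw [mem_inter] at hp
  refine mem_longGapStarts.2 ⟨mem_union_left _ hp.1, fun q hq hqp => ?_⟩
  rcases mem_union.1 hq with hqA | hqB
  · exact (hsep q hqA p hp.2 hqp).2
  · exact (hsep p hp.1 q hqB hqp.symm).1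

lemma val_sub_of_add_natCast_eq {p q : ZMod n} {i j : ℕ} (h : p + i = q + j) (hji : j ≤ i)
    (hi : i < n) : (q - p).val = i - j := by
  have : q - p = ((i - j : ℕ) : ZMod n) := by
    rw [Nat.cast_sub hji]
    linear_combination -h
  rw [this, ZMod.val_cast_of_lt (by omega)]

variable [NeZero n]

theorem sum_le_of_le_val_sub {P : Finset (ZMod n)} (hP : 1 < #P) (w : ZMod n → ℕ)
    (hw : ∀ p ∈ P, ∀ q ∈ P, p ≠ q → w p ≤ (q - p).val) : ∑ p ∈ P, w p ≤ n := by
  have hw_lt : ∀ p ∈ P, w p < n := fun p hp => by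
    obtain ⟨q, hq, hqp⟩ := exists_mem_ne hP p
    exact (hw p hp q hq hqp.symm).trans_lt (ZMod.val_lt _)
  let arc (p : ZMod n) : Finset (ZMod n) := (range (w p)).image fun i : ℕ => p + i
  have card_arc : ∀ p ∈ P, #(arc p) = w p := fun p hp => by
    rw [card_image_of_injOn, card_range]
    intro i hi j hj hij
    simp only [coe_range, Set.mem_Iio] at hi hj
    have := congrArg ZMod.val (add_left_cancel hij)
    rwa [ZMod.val_cast_of_lt (hi.trans (hw_lt p hp)),
      ZMod.val_cast_of_lt (hj.trans (hw_lt p hp))] at this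
  have disjoint_arc : (P : Set (ZMod n)).PairwiseDisjoint arc := by
    intro p hp q hq hpq
    rw [Function.onFun, Finset.disjoint_left]
    simp only [arc, mem_image, mem_range]
    rintro _ ⟨i, hi, rfl⟩ ⟨j, hj, hqp⟩
    rcases le_total j i with hji | hij
    · have := val_sub_of_add_natCast_eq hqp.symm hji (hi.trans (hw_lt p hp))
      have := hw p hp q hq hpq
      omega
    · have := val_sub_of_add_natCast_eq hqp hij (hj.trans (hw_lt q hq))
      have := hw q hq p hp hpq.symm
      omega
  calc ∑ p ∈ P, w p = ∑ p ∈ P, #(arc p) := (sum_congr rfl card_arc).symm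
    _ = #(P.biUnion arc) := (card_biUnion disjoint_arc).symm
    _ ≤ Fintype.card (ZMod n) := card_le_univ _
    _ = n := ZMod.card n

theorem exists_mem_longGapStarts {D : ℕ} {S T : Finset (ZMod n)} (hS : S.Nonempty)
    (hT : T.Nonempty) (hST : ∀ p ∈ S, ∀ q ∈ T, D ≤ (q - p).val) :
    ∃ p ∈ S, p ∈ longGapStarts D (S ∪ T) := by
  obtain ⟨⟨p, q⟩, hpq, hmin⟩ :=
    (S ×ˢ T).exists_min_image (fun x => (x.2 - x.1).val) (hS.product hT)
  rw [mem_product] at hpq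
  -- A point of `S` strictly between `p` and `q` would be closer to `q` than `p` is.
  refine ⟨p, hpq.1, mem_longGapStarts.2 ⟨mem_union_left _ hpq.1, fun r hr hrp => ?_⟩⟩
  rcases mem_union.1 hr with hrS | hrT
  · by_contra! hlt
    have hle : (r - p).val ≤ (q - p).val := (hlt.trans_le (hST p hpq.1 q hpq.2)).le
    have hqr : (q - r).val = (q - p).val - (r - p).val := by
      rw [← ZMod.val_sub hle, sub_sub_sub_cancel_right]
    have hrp_pos : 0 < (r - p).val := ZMod.val_pos.2 (sub_ne_zero.2 hrp)
    have := hmin (r, q) (mem_product.2 ⟨hrS, hpq.2⟩)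
    dsimp only at this
    omega
  · exact hST p hpq.1 r hrT

variable {D : ℕ} {A B : Finset (ZMod n)}

theorem CyclicallySeparated.card_inter_lt_card_longGapStarts (hsep : CyclicallySeparated D A B)
    (hA : A.Nonempty) (hB : B.Nonempty) (hAB : A ≠ B) :
    2 ≤ #(longGapStarts D (A ∪ B)) ∧ #(A ∩ B) < #(longGapStarts D (A ∪ B)) := by
  rcases (A ∩ B).eq_empty_or_nonempty with hI | hI
  · have hne : ∀ a ∈ A, ∀ b ∈ B, a ≠ b := fun a ha b hb hab =>
      (eq_empty_iff_forall_notMem.1 hI) a (mem_inter.2 ⟨ha, hab ▸ hb⟩)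
    obtain ⟨p, hpA, hpE⟩ := exists_mem_longGapStarts hA hB
      fun p hp q hq => (hsep p hp q hq (hne p hp q hq)).1
    obtain ⟨q, hqB, hqE⟩ := exists_mem_longGapStarts hB hA
      fun p hp q hq => (hsep q hq p hp (hne q hq p hp)).2
    rw [union_comm] at hqE
    have h2 : 2 ≤ #(longGapStarts D (A ∪ B)) := by
      rw [← card_pair (hne p hpA q hqB)]
      exact card_le_card (insert_subset hpE (singleton_subset_iff.2 hqE))
    rw [hI, card_empty]
    exact ⟨h2, by omega⟩
  · have hS : ((A ∪ B) \ (A ∩ B)).Nonempty := by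
      rw [nonempty_iff_ne_empty, Ne, sdiff_eq_empty_iff_subset]
      intro h
      exact hAB (subset_union_left.trans (h.trans inter_subset_right) |>.antisymm
        (subset_union_right.trans (h.trans inter_subset_left)))
    obtain ⟨p, hpS, hpE⟩ := exists_mem_longGapStarts hS hI fun p hp q hq => by
      obtain ⟨hpAB, hpI⟩ := mem_sdiff.1 hp
      have hpq : p ≠ q := fun h => hpI (h ▸ hq)
      rw [mem_inter] at hq
      rcases mem_union.1 hpAB with hpA | hpB
      · exact (hsep p hpA q hq.2 hpq).1
      · exact (hsep q hq.1 p hpB hpq.symm).2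
    rw [sdiff_union_of_subset inter_subset_union] at hpE
    have hc : #(A ∩ B) + 1 ≤ #(longGapStarts D (A ∪ B)) := by
      rw [← card_insert_of_notMem (mem_sdiff.1 hpS).2]
      exact card_le_card (insert_subset hpE hsep.inter_subset_longGapStarts)
    have := hI.card_pos
    omega

lemma CyclicallySeparated.two_le_val_sub (hsep : CyclicallySeparated D A B)
    (hA : ∀ a ∈ A, a + 1 ∉ A) (hB : ∀ b ∈ B, b + 1 ∉ B) (hD : 2 ≤ D) :
    ∀ p ∈ A ∪ B, ∀ q ∈ A ∪ B, p ≠ q → 2 ≤ (q - p).val := by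
  intro p hp q hq hpq
  by_contra! h
  have hpos : 0 < (q - p).val := ZMod.val_pos.2 (sub_ne_zero.2 hpq.symm)
  have h1 : (q - p).val = 1 := by omega
  have hq1 : q = p + 1 := by
    rw [← sub_eq_iff_eq_add', ← ZMod.natCast_zmod_val (q - p), h1, Nat.cast_one]
  rcases mem_union.1 hp with hpA | hpB <;> rcases mem_union.1 hq with hqA | hqB
  · exact hA p hpA (hq1 ▸ hqA)
  · have := (hsep p hpA q hqB hpq).1; omega
  · have := (hsep q hqA p hpB hpq.symm).2; omega
  · exact hB p hpB (hq1 ▸ hqB)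

theorem CyclicallySeparated.le_three_or_mul_card_le_or (hsep : CyclicallySeparated D A B)
    (hA : ∀ a ∈ A, a + 1 ∉ A) (hB : ∀ b ∈ B, b + 1 ∉ B) (hA2 : 1 < #A) (hBne : B.Nonempty) :
    D ≤ 3 ∨ D * #A ≤ n ∨ 2 * (#A + #B + D) ≤ n + 6 := by
  rcases le_or_gt D 3 with hD | hD
  · exact Or.inl hD
  right
  set E := longGapStarts D (A ∪ B)
  have hP : 1 < #(A ∪ B) := hA2.trans_le (card_le_card subset_union_left)
  have hsum := sum_le_of_le_val_sub hP (fun p => if p ∈ E then D else 2) fun p hp q hq hpq => by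
    split_ifs with hpE
    · exact (mem_longGapStarts.1 hpE).2 q hq (Ne.symm hpq)
    · exact hsep.two_le_val_sub hA hB (by omega) p hp q hq hpq
  have hEP : E ⊆ A ∪ B := fun p hp => (mem_longGapStarts.1 hp).1
  rw [sum_ite, sum_const, sum_const, smul_eq_mul, smul_eq_mul, filter_mem_eq_inter,
    inter_eq_right.2 hEP] at hsum
  have hsplit := card_filter_add_card_filter_not (s := A ∪ B) (· ∈ E)
  rw [filter_mem_eq_inter, inter_eq_right.2 hEP] at hsplit
  by_cases hAB : A = B
  · subst hAB
    have hAE : #A ≤ #E := by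
      simpa only [inter_self] using card_le_card hsep.inter_subset_longGapStarts
    rw [union_self] at hsplit
    left
    nlinarith
  · right
    obtain ⟨h2, hc⟩ := hsep.card_inter_lt_card_longGapStarts (card_pos.1 (by omega)) hBne hAB
    have := card_union_add_card_inter A B
    nlinarith

end CyclicPacking

section CycleVertices

variable {V : Type*} {G : SimpleGraph V} {x : V} {c : G.Walk x x}

def cycleVert (c : G.Walk x x) (k : ZMod c.length) : V := c.getVert k.val

lemma _root_.SimpleGraph.Walk.IsCycle.neZero_length (hc : c.IsCycle) : NeZero c.length :=
  ⟨by have := hc.three_le_length; omega⟩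

lemma cycleVert_natCast {i : ℕ} (hi : i ≤ c.length) : cycleVert c i = c.getVert i := by
  rcases hi.lt_or_eq with hi | rfl
  · rw [cycleVert, ZMod.val_cast_of_lt hi]
  · rw [cycleVert, ZMod.natCast_self, ZMod.val_zero, c.getVert_zero, c.getVert_length]

lemma cycleVert_injective (hc : c.IsCycle) : Function.Injective (cycleVert c) := by
  have := hc.neZero_length
  intro k l h
  have hk := ZMod.val_lt k
  have hl := ZMod.val_lt l
  exact ZMod.val_injective _ <| hc.getVert_injOn'
    (by simp only [Set.mem_ofPred_eq]; omega) (by simp only [Set.mem_ofPred_eq]; omega) h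

lemma mem_support_iff_exists_cycleVert {v : V} : v ∈ c.support ↔ ∃ k, cycleVert c k = v := by
  refine ⟨fun h => ?_, by rintro ⟨k, rfl⟩; exact c.getVert_mem_support _⟩
  obtain ⟨i, rfl, hi⟩ := Walk.mem_support_iff_exists_getVert.1 h
  exact ⟨i, cycleVert_natCast hi⟩

variable [NeZero c.length]

lemma adj_cycleVert_add_one (k : ZMod c.length) :
    c.toSubgraph.spanningCoe.Adj (cycleVert c k) (cycleVert c (k + 1)) := by
  have hk := ZMod.val_lt k
  have : k + 1 = ((k.val + 1 : ℕ) : ZMod c.length) := by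
    rw [Nat.cast_succ, ZMod.natCast_zmod_val]
  rw [this, cycleVert_natCast hk]
  exact c.toSubgraph_adj_getVert hk

lemma exists_walk_cycleVert (k l : ZMod c.length) :
    ∃ p : c.toSubgraph.spanningCoe.Walk (cycleVert c k) (cycleVert c l),
      p.length = (l - k).val := by
  suffices h : ∀ m : ℕ,
      ∃ p : c.toSubgraph.spanningCoe.Walk (cycleVert c k) (cycleVert c (k + m)), p.length = m by
    obtain ⟨p, hp⟩ := h (l - k).val
    exact ⟨p.copy rfl (by rw [ZMod.natCast_zmod_val, add_sub_cancel]),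
      by rw [Walk.length_copy, hp]⟩
  intro m
  induction m with
  | zero =>
    exact ⟨Walk.nil.copy rfl (by rw [Nat.cast_zero, add_zero]), by rw [Walk.length_copy]; rfl⟩
  | succ m ih =>
    obtain ⟨p, hp⟩ := ih
    refine ⟨(p.concat (adj_cycleVert_add_one _)).copy rfl
      (by rw [Nat.cast_succ, add_assoc]), ?_⟩
    rw [Walk.length_copy, Walk.length_concat, hp]

lemma dist_cycleVert_le (k l : ZMod c.length) :
    c.toSubgraph.spanningCoe.dist (cycleVert c k) (cycleVert c l) ≤ (l - k).val := by
  obtain ⟨p, hp⟩ := exists_walk_cycleVert k l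
  exact hp ▸ dist_le p

lemma one_le_dist_cycleVert (hc : c.IsCycle) {k l : ZMod c.length} (h : k ≠ l) :
    1 ≤ c.toSubgraph.spanningCoe.dist (cycleVert c k) (cycleVert c l) := by
  obtain ⟨p, -⟩ := exists_walk_cycleVert k l
  exact p.reachable.pos_dist_of_ne ((cycleVert_injective hc).ne h)

lemma add_one_notMem_of_not_adj [DecidableRel G.Adj] {u : V}
    (hu : ∀ v w : V, G.Adj u v → G.Adj u w → ¬ c.toSubgraph.spanningCoe.Adj v w) :
    ∀ k ∈ ({k | G.Adj u (cycleVert c k)} : Finset (ZMod c.length)),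
      k + 1 ∉ ({k | G.Adj u (cycleVert c k)} : Finset (ZMod c.length)) := fun k hk hk1 =>
  hu _ _ (mem_filter.1 hk).2 (mem_filter.1 hk1).2 (adj_cycleVert_add_one k)

lemma ncard_neighborSet_inter_support [DecidableRel G.Adj] (hc : c.IsCycle) (u : V) :
    (G.neighborSet u ∩ {v | v ∈ c.support}).ncard = #{k | G.Adj u (cycleVert c k)} := by
  have : G.neighborSet u ∩ {v | v ∈ c.support} =
      cycleVert c '' ↑({k | G.Adj u (cycleVert c k)} : Finset (ZMod c.length)) := by
    ext v
    simp only [Set.mem_inter_iff, mem_neighborSet, Set.mem_ofPred_eq,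
      mem_support_iff_exists_cycleVert, coe_filter, mem_univ, true_and, Set.mem_image]
    constructor
    · rintro ⟨hv, k, rfl⟩
      exact ⟨k, hv, rfl⟩
    · rintro ⟨k, hk, rfl⟩
      exact ⟨hk, k, rfl⟩
  rw [this, Set.ncard_image_of_injective _ (cycleVert_injective hc), Set.ncard_coe_finset]

end CycleVertices

lemma natCast_le_max_of_le_three_or {D a b s : ℕ} (ha : 0 < a)
    (h : D ≤ 3 ∨ D * a ≤ s ∨ 2 * (a + b + D) ≤ s + 6) :
    (D : ℝ) ≤ max 3 (max ((s : ℝ) / a) (((s / 2 : ℕ) : ℝ) + 3 - a - b)) := by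
  rcases h with h | h | h
  · exact le_max_of_le_left (by exact_mod_cast h)
  · refine le_max_of_le_right (le_max_of_le_left ?_)
    rw [le_div_iff₀ (by exact_mod_cast ha)]
    exact_mod_cast h
  · refine le_max_of_le_right (le_max_of_le_right ?_)
    have : a + b + D ≤ s / 2 + 3 := by omega
    have : (a : ℝ) + b + D ≤ ((s / 2 : ℕ) : ℝ) + 3 := by exact_mod_cast this
    linarith

theorem short_dist_two_general {V : Type*} (G : SimpleGraph V) (s : ℕ)
    (x : V) (c : G.Walk x x) (hc : c.IsCycle) (hlen : c.length = s)
    (u₁ u₂ : V)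
    (hd₁ : 2 ≤ (G.neighborSet u₁ ∩ {v | v ∈ c.support}).ncard)
    (hd₂ : 0 < (G.neighborSet u₂ ∩ {v | v ∈ c.support}).ncard)
    (hcons₁ : ∀ v w : V, G.Adj u₁ v → G.Adj u₁ w → ¬ c.toSubgraph.spanningCoe.Adj v w)
    (hcons₂ : ∀ v w : V, G.Adj u₂ v → G.Adj u₂ w → ¬ c.toSubgraph.spanningCoe.Adj v w) :
    ∃ v₁ v₂ : V, v₁ ∈ c.support ∧ v₂ ∈ c.support ∧ G.Adj u₁ v₁ ∧ G.Adj u₂ v₂ ∧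
      1 ≤ c.toSubgraph.spanningCoe.dist v₁ v₂ ∧
      (c.toSubgraph.spanningCoe.dist v₁ v₂ : ℝ) ≤
        max 3 (max
          ((s : ℝ) / ((G.neighborSet u₁ ∩ {v | v ∈ c.support}).ncard : ℝ))
          (((s / 2 : ℕ) : ℝ) + 3
            - ((G.neighborSet u₁ ∩ {v | v ∈ c.support}).ncard : ℝ)
            - ((G.neighborSet u₂ ∩ {v | v ∈ c.support}).ncard : ℝ))) := by
  classical
  subst hlen
  have := hc.neZero_length
  simp only [ncard_neighborSet_inter_support hc] at hd₁ hd₂ ⊢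
  set A : Finset (ZMod c.length) := {k | G.Adj u₁ (cycleVert c k)}
  set B : Finset (ZMod c.length) := {k | G.Adj u₂ (cycleVert c k)}
  let d : ZMod c.length × ZMod c.length → ℕ := fun p =>
    c.toSubgraph.spanningCoe.dist (cycleVert c p.1) (cycleVert c p.2)
  obtain ⟨b₀, hb₀⟩ := card_pos.1 hd₂
  obtain ⟨a₀, ha₀, hab₀⟩ := exists_mem_ne hd₁ b₀
  obtain ⟨⟨a, b⟩, hab, hmin⟩ := ({p ∈ A ×ˢ B | p.1 ≠ p.2}).exists_min_image d
    ⟨(a₀, b₀), mem_filter.2 ⟨mem_product.2 ⟨ha₀, hb₀⟩, hab₀⟩⟩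
  rw [mem_filter, mem_product] at hab
  obtain ⟨⟨ha, hb⟩, hab⟩ := hab
  have hsep : CyclicallySeparated (d (a, b)) A B := fun a' ha' b' hb' hab' => by
    have hle := hmin (a', b') (mem_filter.2 ⟨mem_product.2 ⟨ha', hb'⟩, hab'⟩)
    exact ⟨hle.trans (dist_cycleVert_le a' b'),
      hle.trans (dist_comm.trans_le (dist_cycleVert_le b' a'))⟩
  refine ⟨cycleVert c a, cycleVert c b, mem_support_iff_exists_cycleVert.2 ⟨a, rfl⟩,
    mem_support_iff_exists_cycleVert.2 ⟨b, rfl⟩, (mem_filter.1 ha).2, (mem_filter.1 hb).2,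
    one_le_dist_cycleVert hc hab, natCast_le_max_of_le_three_or (by omega) ?_⟩
  exact hsep.le_three_or_mul_card_le_or (add_one_notMem_of_not_adj hcons₁)
    (add_one_notMem_of_not_adj hcons₂) hd₁ ⟨b, hb⟩

/-- Lemma 2.4 (2): close neighbours on a cycle when `deg_C(u₁) ≥ 2`. -/
theorem short_dist_two {V : Type*} [Fintype V] (G : SimpleGraph V) (s : ℕ) (hs : 3 ≤ s)
    (x : V) (c : G.Walk x x) (hc : c.IsCycle) (hlen : c.length = s)
    (u₁ u₂ : V) (hne : u₁ ≠ u₂) (hu₁ : u₁ ∉ c.support) (hu₂ : u₂ ∉ c.support)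
    (hd₁ : 2 ≤ (G.neighborSet u₁ ∩ {v | v ∈ c.support}).ncard)
    (hd₂ : 0 < (G.neighborSet u₂ ∩ {v | v ∈ c.support}).ncard)
    (hcons₁ : ∀ v w : V, G.Adj u₁ v → G.Adj u₁ w → ¬ c.toSubgraph.spanningCoe.Adj v w)
    (hcons₂ : ∀ v w : V, G.Adj u₂ v → G.Adj u₂ w → ¬ c.toSubgraph.spanningCoe.Adj v w) :
    ∃ v₁ v₂ : V, v₁ ∈ c.support ∧ v₂ ∈ c.support ∧ G.Adj u₁ v₁ ∧ G.Adj u₂ v₂ ∧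
      1 ≤ c.toSubgraph.spanningCoe.dist v₁ v₂ ∧
      (c.toSubgraph.spanningCoe.dist v₁ v₂ : ℝ) ≤
        max 3 (max
          ((s : ℝ) / ((G.neighborSet u₁ ∩ {v | v ∈ c.support}).ncard : ℝ))
          (((s / 2 : ℕ) : ℝ) + 3
            - ((G.neighborSet u₁ ∩ {v | v ∈ c.support}).ncard : ℝ)
            - ((G.neighborSet u₂ ∩ {v | v ∈ c.support}).ncard : ℝ))) :=
  short_dist_two_general G s x c hc hlen u₁ u₂ hd₁ hd₂ hcons₁ hcons₂

end Dean
end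

section
/- Let T be a trigonal graph with boundary cycle ∂T and |V(T)| = t, and let u, v be two distinct vertices of T with dist_{∂T}(u, v) = d. Then for every integer ℓ with d ≤ ℓ ≤ t − d, there exists a path in T from u to v of length ℓ. In particular, if u and v are adjacent on ∂T, then for every ℓ with 1 ≤ ℓ ≤ t − 1 there is a (u,v)-path in T of length ℓ. -/
open SimpleGraph

namespace Dean

variable {V : Type*}

/-!
Enumerate the boundary cycle as `f : ZMod t → V`. Between `f i` and `f (i + n)` the two arcs of
`∂T` have lengths `n` and `t - n`, and by induction along the construction every length between
them is the length of an `f i`–`f (i + n)` path in `T`. This is the theorem, because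
`dist_{∂T}` is the length of the shorter arc: a boundary walk moves the index by `±1` per step.

When `x` is inserted on the boundary edge `ab`, the two extreme lengths of a pair are its new arcs.
For two old vertices one arc keeps its length and the other grows by one, so every intermediate
length was already available. A path from an old vertex `u` to `x` of length `ℓ` is an old path
from `u` to `a` (or `b`) of length `ℓ - 1` followed by the edge to `x`, which the old path cannot
meet because `x` is new.
-/

lemma _root_.ZMod.natCast_inj_of_lt {n a b : ℕ} (ha : a < n) (hb : b < n)
    (h : (a : ZMod n) = b) : a = b := by
  simpa [ZMod.val_cast_of_lt ha, ZMod.val_cast_of_lt hb] using congrArg ZMod.val h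

lemma _root_.ZMod.natCast_pred_self (n : ℕ) [NeZero n] : ((n - 1 : ℕ) : ZMod n) = -1 := by
  rw [Nat.cast_pred (Nat.pos_of_neZero n), ZMod.natCast_self, zero_sub]

lemma _root_.ZMod.exists_natCast_eq_or_eq (n : ℕ) (m : ZMod (n + 1)) :
    (∃ k < n, (k : ZMod (n + 1)) = m) ∨ (n : ZMod (n + 1)) = m := by
  rcases Nat.lt_succ_iff_lt_or_eq.1 m.val_lt with h | h
  · exact Or.inl ⟨m.val, h, m.natCast_zmod_val⟩
  · exact Or.inr ((congrArg (Nat.cast : ℕ → ZMod (n + 1)) h).symm.trans m.natCast_zmod_val)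

lemma _root_.SimpleGraph.Walk.IsPath.exists_concat_of_notMem_support {G G' : SimpleGraph V}
    (hle : G ≤ G') {u c x : V} {p : G.Walk u c} (hp : p.IsPath) (huc : u ≠ c)
    (hx : x ∉ G.support) (hcx : G'.Adj c x) :
    ∃ q : G'.Walk u x, q.IsPath ∧ q.length = p.length + 1 := by
  refine ⟨(p.mapLe hle).concat hcx, (hp.mapLe hle).concat ?_ hcx, by simp⟩
  rw [Walk.support_mapLe_eq_support]
  exact fun h ↦ hx (mem_support_of_mem_walk_support p (Walk.not_nil_of_ne huc) h)

section Boundary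

structure IsCyclicEnum (B : SimpleGraph V) (S : Set V) {t : ℕ} (f : ZMod t → V) : Prop where
  three_le : 3 ≤ t
  injective : f.Injective
  range_eq : Set.range f = S
  adj_iff : ∀ y z, B.Adj y z ↔ ∃ i, s(y, z) = s(f i, f (i + 1))

def HasPathsBetweenArcs (T : SimpleGraph V) {t : ℕ} (f : ZMod t → V) : Prop :=
  ∀ (i : ZMod t) (n : ℕ), 0 < n → n < t → ∀ ℓ ∈ Set.uIcc n (t - n),
    ∃ p : T.Walk (f i) (f (i + n)), p.IsPath ∧ p.length = ℓ

variable {B T T' : SimpleGraph V} {S : Set V} {t : ℕ} {f : ZMod t → V} {x : V}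

lemma isCyclicEnum_triangle {a b c : V} (hab : a ≠ b) (hbc : b ≠ c) (hac : a ≠ c) :
    IsCyclicEnum (t := 3) (fromEdgeSet {s(a, b), s(b, c), s(a, c)}) {a, b, c} ![a, b, c] where
  three_le := le_rfl
  injective := by
    intro i j h
    fin_cases i <;> fin_cases j <;> first | rfl | simp_all [eq_comm]
  range_eq := by
    ext w
    constructor
    · rintro ⟨i, rfl⟩
      fin_cases i <;> simp
    · rintro (rfl | rfl | rfl)
      exacts [⟨0, rfl⟩, ⟨1, rfl⟩, ⟨2, rfl⟩]
  adj_iff y z := by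
    rw [fromEdgeSet_adj]
    constructor
    · rintro ⟨(h | h | h), -⟩
      exacts [⟨0, h⟩, ⟨1, h⟩, ⟨2, h.trans Sym2.eq_swap⟩]
    · rintro ⟨i, h⟩
      rw [Ne, ← Sym2.mk_isDiag_iff, h, Sym2.mk_isDiag_iff]
      fin_cases i
      exacts [⟨Or.inl rfl, hab⟩, ⟨Or.inr (Or.inl rfl), hbc⟩,
        ⟨Or.inr (Or.inr Sym2.eq_swap), hac.symm⟩]

namespace IsCyclicEnum

lemma neZero (hf : IsCyclicEnum B S f) : NeZero t := ⟨by have := hf.three_le; omega⟩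

lemma adj (hf : IsCyclicEnum B S f) (i : ZMod t) : B.Adj (f i) (f (i + 1)) :=
  (hf.adj_iff _ _).2 ⟨i, rfl⟩

lemma apply_mem (hf : IsCyclicEnum B S f) (i : ZMod t) : f i ∈ S := hf.range_eq ▸ ⟨i, rfl⟩

lemma apply_ne (hf : IsCyclicEnum B S f) (hx : x ∉ S) (i : ZMod t) : f i ≠ x :=
  fun h ↦ hx (h ▸ hf.apply_mem i)

lemma ncard_eq (hf : IsCyclicEnum B S f) : S.ncard = t := by
  have := hf.neZero
  rw [← hf.range_eq, Set.ncard_range_of_injective hf.injective, Nat.card_zmod]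

lemma comp_add_right (hf : IsCyclicEnum B S f) (c : ZMod t) :
    IsCyclicEnum B S (fun i ↦ f (i + c)) where
  three_le := hf.three_le
  injective := hf.injective.comp (add_left_injective c)
  range_eq := by rw [← hf.range_eq]; exact (Equiv.addRight c).surjective.range_comp f
  adj_iff y z := by
    rw [hf.adj_iff]
    exact (Equiv.subRight c).exists_congr fun i ↦ by
      simp only [Equiv.subRight_apply, sub_add_cancel, sub_add_eq_add_sub]

lemma exists_walk_arc (hf : IsCyclicEnum B S f) (i : ZMod t) (n : ℕ) :
    ∃ p : B.Walk (f i) (f (i + n)),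
      p.support = (List.range (n + 1)).map (fun m : ℕ ↦ f (i + m)) := by
  induction n with
  | zero => exact ⟨Walk.nil.copy rfl (by simp), by simp⟩
  | succ n ih =>
    obtain ⟨p, hp⟩ := ih
    refine ⟨(p.concat (hf.adj _)).copy rfl (by push_cast; ring_nf), ?_⟩
    rw [Walk.support_copy, Walk.support_concat, hp]
    conv_rhs => rw [List.range_succ]
    simp [add_assoc]

lemma exists_isPath_arc (hf : IsCyclicEnum B S f) (i : ZMod t) {n : ℕ} (hn : n < t) :
    ∃ p : B.Walk (f i) (f (i + n)), p.IsPath ∧ p.length = n := by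
  obtain ⟨p, hp⟩ := hf.exists_walk_arc i n
  refine ⟨p, ?_, ?_⟩
  · rw [Walk.isPath_def, hp]
    refine List.Nodup.map_on (fun a ha b hb hab ↦ ?_) List.nodup_range
    rw [List.mem_range] at ha hb
    exact ZMod.natCast_inj_of_lt (by omega) (by omega) (add_left_cancel (hf.injective hab))
  · simpa [hp] using p.length_support.symm

lemma exists_isPath_arc_compl (hf : IsCyclicEnum B S f) (i : ZMod t) {n : ℕ} (hn0 : 0 < n)
    (hn : n < t) : ∃ p : B.Walk (f i) (f (i + n)), p.IsPath ∧ p.length = t - n := by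
  obtain ⟨p, hp, hl⟩ := hf.exists_isPath_arc (i + n) (n := t - n) (by omega)
  have hi : f (i + n + ↑(t - n)) = f i := by simp [Nat.cast_sub hn.le]
  exact ⟨(p.copy rfl hi).reverse, by simpa using hp.reverse, by simpa using hl⟩

lemma exists_isPath_of_eq_or_eq (hf : IsCyclicEnum B S f) (hle : B ≤ T) (i : ZMod t) {n : ℕ}
    (hn0 : 0 < n) (hn : n < t) {ℓ : ℕ} (hℓ : ℓ = n ∨ ℓ = t - n) :
    ∃ p : T.Walk (f i) (f (i + n)), p.IsPath ∧ p.length = ℓ := by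
  obtain ⟨p, hp, hl⟩ : ∃ p : B.Walk (f i) (f (i + n)), p.IsPath ∧ p.length = ℓ := by
    rcases hℓ with rfl | rfl
    exacts [hf.exists_isPath_arc i hn, hf.exists_isPath_arc_compl i hn0 hn]
  exact ⟨p.mapLe hle, hp.mapLe hle, by rw [Walk.length_mapLe, hl]⟩

lemma hasPathsBetweenArcs_of_eq_three (hf : IsCyclicEnum B S f) (ht : t = 3) (hle : B ≤ T) :
    HasPathsBetweenArcs T f := fun i _ hn0 hn _ hℓ ↦
  hf.exists_isPath_of_eq_or_eq hle i hn0 hn (by rw [Set.mem_uIcc] at hℓ; omega)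

lemma natAbs_valMinAbs_le_length (hf : IsCyclicEnum B S f) {i j : ZMod t}
    (p : B.Walk (f i) (f j)) : (j - i).valMinAbs.natAbs ≤ p.length := by
  have := hf.neZero
  have hone : (1 : ZMod t).valMinAbs.natAbs ≤ 1 := by
    rw [ZMod.valMinAbs_natAbs_eq_min]
    exact (min_le_left _ _).trans (ZMod.val_one_eq_one_mod t ▸ Nat.mod_le 1 t)
  suffices ∀ {y z : V} (p : B.Walk y z) (i j : ZMod t), y = f i → z = f j →
      (j - i).valMinAbs.natAbs ≤ p.length from this p i j rfl rfl
  intro y z p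
  induction p with
  | nil => rintro i j rfl h; simp [hf.injective h]
  | @cons y w z h q ih =>
    rintro i j rfl rfl
    obtain ⟨m, hm⟩ := (hf.adj_iff _ _).1 h
    obtain ⟨e, he, rfl⟩ : ∃ e : ZMod t, e.valMinAbs.natAbs ≤ 1 ∧ w = f (i + e) := by
      rcases Sym2.eq_iff.1 hm with ⟨hi, rfl⟩ | ⟨hi, rfl⟩ <;> rw [hf.injective hi]
      · exact ⟨1, hone, rfl⟩
      · exact ⟨-1, by rwa [ZMod.natAbs_valMinAbs_neg], by ring_nf⟩
    calc (j - i).valMinAbs.natAbs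
        = ((j - (i + e)) + e).valMinAbs.natAbs := by ring_nf
      _ ≤ ((j - (i + e)).valMinAbs + e.valMinAbs).natAbs := ZMod.natAbs_valMinAbs_add_le _ _
      _ ≤ (j - (i + e)).valMinAbs.natAbs + e.valMinAbs.natAbs := Int.natAbs_add_le _ _
      _ ≤ (q.cons h).length := by have := ih (i + e) j rfl rfl; rw [Walk.length_cons]; omega

lemma exists_isPath_of_dist_le (hf : IsCyclicEnum B S f) (hP : HasPathsBetweenArcs T f)
    {u v : V} (hu : u ∈ S) (hv : v ∈ S) (huv : u ≠ v) {ℓ : ℕ} (h₁ : B.dist u v ≤ ℓ)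
    (h₂ : ℓ ≤ t - B.dist u v) : ∃ p : T.Walk u v, p.IsPath ∧ p.length = ℓ := by
  have := hf.neZero
  obtain ⟨i, rfl⟩ := hf.range_eq ▸ hu
  obtain ⟨j, rfl⟩ := hf.range_eq ▸ hv
  have hj : i + ((j - i).val : ZMod t) = j := by simp
  have hn0 : (j - i).val ≠ 0 := by
    rw [ZMod.val_ne_zero, sub_ne_zero]; exact fun h ↦ huv (by rw [h])
  obtain ⟨p, -, -⟩ := hf.exists_isPath_arc i (j - i).val_lt
  rw [hj] at p
  obtain ⟨q, hq⟩ := Reachable.exists_walk_length_eq_dist ⟨p⟩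
  have hmin := hf.natAbs_valMinAbs_le_length q
  rw [ZMod.valMinAbs_natAbs_eq_min, hq] at hmin
  rw [← hj]
  exact hP i _ (Nat.pos_of_ne_zero hn0) (j - i).val_lt ℓ (by rw [Set.mem_uIcc]; omega)

end IsCyclicEnum

lemma HasPathsBetweenArcs.mono (hP : HasPathsBetweenArcs T f) (hle : T ≤ T') :
    HasPathsBetweenArcs T' f := fun i n hn0 hn ℓ hℓ ↦
  let ⟨p, hp, hl⟩ := hP i n hn0 hn ℓ hℓ
  ⟨p.mapLe hle, hp.mapLe hle, by rw [Walk.length_mapLe, hl]⟩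

lemma HasPathsBetweenArcs.comp_add_right (hP : HasPathsBetweenArcs T f) (c : ZMod t) :
    HasPathsBetweenArcs T (fun i ↦ f (i + c)) := fun i n hn0 hn ℓ hℓ ↦ by
  beta_reduce
  rw [add_right_comm i]
  exact hP (i + c) n hn0 hn ℓ hℓ

def cycleSnoc (f : ZMod t → V) (x : V) : ZMod (t + 1) → V :=
  fun m ↦ if m.val < t then f m.val else x

lemma cycleSnoc_natCast_of_lt (x : V) {k : ℕ} (hk : k < t) : cycleSnoc f x k = f k := by
  simp [cycleSnoc, ZMod.val_cast_of_lt (hk.trans t.lt_succ_self), hk]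

lemma cycleSnoc_natCast_self (x : V) : cycleSnoc f x t = x := by
  simp [cycleSnoc, ZMod.val_cast_of_lt t.lt_succ_self]

lemma cycleSnoc_zero (x : V) (ht : 0 < t) : cycleSnoc f x 0 = f 0 := by
  simpa using cycleSnoc_natCast_of_lt (f := f) x ht

namespace IsCyclicEnum

lemma cycleSnoc_adj (hf : IsCyclicEnum B S f) (hx : x ∉ S) (m : ZMod (t + 1)) :
    (B.deleteEdges {s(f (-1), f 0)} ⊔ fromEdgeSet {s(f (-1), x), s(x, f 0)}).Adj
      (cycleSnoc f x m) (cycleSnoc f x (m + 1)) := by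
  have := hf.neZero
  have ht := hf.three_le
  rcases ZMod.exists_natCast_eq_or_eq t m with ⟨k, hk, rfl⟩ | rfl
  · rw [← Nat.cast_add_one, cycleSnoc_natCast_of_lt x hk]
    rcases Nat.lt_or_ge (k + 1) t with hk1 | hk1
    · rw [cycleSnoc_natCast_of_lt x hk1, Nat.cast_add_one]
      refine Or.inl ((deleteEdges_adj ..).2 ⟨hf.adj k, fun h ↦ ?_⟩)
      rcases Sym2.eq_iff.1 (Set.mem_singleton_iff.1 h) with ⟨h1, -⟩ | ⟨h1, h2⟩
      · have := ZMod.natCast_inj_of_lt hk (by omega)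
          ((hf.injective h1).trans (ZMod.natCast_pred_self t).symm)
        omega
      · obtain rfl := ZMod.natCast_inj_of_lt hk (by omega)
          ((hf.injective h1).trans Nat.cast_zero.symm)
        have := ZMod.natCast_inj_of_lt (by omega) (by omega)
          ((by simpa using hf.injective h2 : ((1 : ℕ) : ZMod t) = -1).trans
            (ZMod.natCast_pred_self t).symm)
        omega
    · obtain rfl : k = t - 1 := by omega
      rw [Nat.sub_add_cancel (by omega), cycleSnoc_natCast_self, ZMod.natCast_pred_self]
      exact Or.inr ⟨by simp, hf.apply_ne hx _⟩
  · rw [ZMod.natCast_self', cycleSnoc_natCast_self, cycleSnoc_zero x (by omega)]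
    exact Or.inr ⟨by simp, (hf.apply_ne hx 0).symm⟩

lemma exists_cycleSnoc_eq_of_adj (hf : IsCyclicEnum B S f) {y z : V}
    (h : (B.deleteEdges {s(f (-1), f 0)} ⊔ fromEdgeSet {s(f (-1), x), s(x, f 0)}).Adj y z) :
    ∃ m, s(y, z) = s(cycleSnoc f x m, cycleSnoc f x (m + 1)) := by
  have := hf.neZero
  have ht := hf.three_le
  rcases h with h | ⟨h | h, -⟩
  · obtain ⟨hB, hne⟩ := (deleteEdges_adj ..).1 h
    obtain ⟨i, hi⟩ := (hf.adj_iff y z).1 hB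
    have hi1 : i.val + 1 < t := by
      by_contra! h
      refine hne (hi.trans ?_)
      rw [← i.natCast_zmod_val, show i.val = t - 1 by have := i.val_lt; omega,
        ZMod.natCast_pred_self, neg_add_cancel]
    refine ⟨i.val, ?_⟩
    rw [← Nat.cast_add_one, cycleSnoc_natCast_of_lt x (by omega), cycleSnoc_natCast_of_lt x hi1,
      hi, Nat.cast_add_one, ZMod.natCast_zmod_val]
  · refine ⟨(t - 1 : ℕ), ?_⟩
    rw [← Nat.cast_add_one, Nat.sub_add_cancel (by omega), cycleSnoc_natCast_of_lt x (by omega),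
      cycleSnoc_natCast_self, ZMod.natCast_pred_self, h]
  · refine ⟨t, ?_⟩
    rw [ZMod.natCast_self', cycleSnoc_natCast_self, cycleSnoc_zero x (by omega), h]

lemma cycleSnoc (hf : IsCyclicEnum B S f) (hx : x ∉ S) :
    IsCyclicEnum (B.deleteEdges {s(f (-1), f 0)} ⊔ fromEdgeSet {s(f (-1), x), s(x, f 0)})
      (insert x S) (cycleSnoc f x) where
  three_le := by have := hf.three_le; omega
  injective := by
    intro m₁ m₂ h
    rcases ZMod.exists_natCast_eq_or_eq t m₁ with ⟨k₁, h₁, rfl⟩ | rfl <;>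
      rcases ZMod.exists_natCast_eq_or_eq t m₂ with ⟨k₂, h₂, rfl⟩ | rfl
    · rw [cycleSnoc_natCast_of_lt x h₁, cycleSnoc_natCast_of_lt x h₂] at h
      rw [ZMod.natCast_inj_of_lt h₁ h₂ (hf.injective h)]
    · rw [cycleSnoc_natCast_of_lt x h₁, cycleSnoc_natCast_self] at h
      exact (hf.apply_ne hx _ h).elim
    · rw [cycleSnoc_natCast_of_lt x h₂, cycleSnoc_natCast_self] at h
      exact (hf.apply_ne hx _ h.symm).elim
    · rfl
  range_eq := by
    ext w
    constructor
    · rintro ⟨m, rfl⟩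
      rcases ZMod.exists_natCast_eq_or_eq t m with ⟨k, hk, rfl⟩ | rfl
      · exact Set.mem_insert_of_mem x (cycleSnoc_natCast_of_lt x hk ▸ hf.apply_mem _)
      · rw [cycleSnoc_natCast_self]
        exact Set.mem_insert x S
    · have := hf.neZero
      rintro (rfl | hw)
      · exact ⟨t, cycleSnoc_natCast_self w⟩
      · obtain ⟨i, rfl⟩ := hf.range_eq ▸ hw
        exact ⟨i.val, by rw [cycleSnoc_natCast_of_lt x i.val_lt, ZMod.natCast_zmod_val]⟩
  adj_iff y z := by
    refine ⟨hf.exists_cycleSnoc_eq_of_adj, fun ⟨m, h⟩ ↦ ?_⟩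
    rcases Sym2.eq_iff.1 h with ⟨rfl, rfl⟩ | ⟨rfl, rfl⟩
    exacts [hf.cycleSnoc_adj hx m, (hf.cycleSnoc_adj hx m).symm]

end IsCyclicEnum

lemma HasPathsBetweenArcs.exists_isPath_to_inserted (hP : HasPathsBetweenArcs T f)
    (hf : IsCyclicEnum B S f) (hTS : T.support ⊆ S) (hx : x ∉ S) {k : ℕ} (hk : k < t) {ℓ : ℕ}
    (hℓ : min (t - k) (k + 1) < ℓ ∧ ℓ < max (t - k) (k + 1)) :
    ∃ p : (T ⊔ fromEdgeSet {s(f (-1), x), s(x, f 0)}).Walk (f k) x, p.IsPath ∧ p.length = ℓ := by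
  have := hf.neZero
  have hxT : x ∉ T.support := fun h ↦ hx (hTS h)
  have hlast := ZMod.natCast_pred_self t
  have hax : (T ⊔ fromEdgeSet {s(f (-1), x), s(x, f 0)}).Adj (f (-1)) x :=
    Or.inr ⟨by simp, hf.apply_ne hx _⟩
  have hbx : (T ⊔ fromEdgeSet {s(f (-1), x), s(x, f 0)}).Adj (f 0) x :=
    Or.inr ⟨by simp [Sym2.eq_swap], hf.apply_ne hx _⟩
  obtain hk1 | rfl : k + 1 < t ∨ k = t - 1 := by omega
  · have h := hP k (t - 1 - k) (by omega) (by omega) (ℓ - 1) (by rw [Set.mem_uIcc]; omega)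
    rw [← Nat.cast_add, show k + (t - 1 - k) = t - 1 by omega, hlast] at h
    obtain ⟨p, hp, hl⟩ := h
    have hne : f k ≠ f (-1) := fun h ↦ by
      have := ZMod.natCast_inj_of_lt hk (by omega) ((hf.injective h).trans hlast.symm)
      omega
    obtain ⟨q, hq, hql⟩ := hp.exists_concat_of_notMem_support le_sup_left hne hxT hax
    exact ⟨q, hq, by omega⟩
  · have h := hP (-1) 1 one_pos (by omega) (ℓ - 1) (by rw [Set.mem_uIcc]; omega)
    rw [Nat.cast_one, neg_add_cancel] at h
    obtain ⟨p, hp, hl⟩ := h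
    have hne : f (-1) ≠ f 0 := by simpa using (hf.adj (-1)).ne
    obtain ⟨q, hq, hql⟩ := hp.exists_concat_of_notMem_support le_sup_left hne hxT hbx
    rw [hlast]
    exact ⟨q, hq, by omega⟩

lemma HasPathsBetweenArcs.cycleSnoc (hP : HasPathsBetweenArcs T f) (hf : IsCyclicEnum B S f)
    (hle : B ≤ T) (hTS : T.support ⊆ S) (hx : x ∉ S) :
    HasPathsBetweenArcs (T ⊔ fromEdgeSet {s(f (-1), x), s(x, f 0)}) (cycleSnoc f x) := by
  intro i n hn0 hn ℓ hℓ
  rw [Set.mem_uIcc] at hℓ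
  by_cases hext : ℓ = n ∨ ℓ = t + 1 - n
  · exact (hf.cycleSnoc hx).exists_isPath_of_eq_or_eq
      (sup_le_sup_right ((deleteEdges_le _).trans hle) _) i hn0 hn hext
  have hP' := hP.mono (le_sup_left : T ≤ T ⊔ fromEdgeSet {s(f (-1), x), s(x, f 0)})
  rcases ZMod.exists_natCast_eq_or_eq t i with ⟨k, hk, rfl⟩ | rfl
  · rw [← Nat.cast_add]
    rcases lt_trichotomy (k + n) t with hkn | hkn | hkn
    · rw [cycleSnoc_natCast_of_lt x hk, cycleSnoc_natCast_of_lt x hkn, Nat.cast_add]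
      exact hP' k n hn0 (by omega) ℓ (by rw [Set.mem_uIcc]; omega)
    · rw [cycleSnoc_natCast_of_lt x hk, hkn, cycleSnoc_natCast_self]
      exact hP.exists_isPath_to_inserted hf hTS hx hk (by omega)
    · -- the forward arc from `f k` passes through `x`, so in the old cycle it has length `n - 1`
      have e : ((k + n : ℕ) : ZMod (t + 1)) = (k + n - (t + 1) : ℕ) := by
        rw [Nat.cast_sub (by omega), ZMod.natCast_self, sub_zero]
      have e' : ((k + n - (t + 1) : ℕ) : ZMod t) = k + (n - 1 : ℕ) := by
        rw [← Nat.cast_add, ← show k + n - (t + 1) + t = k + (n - 1) by omega, Nat.cast_add,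
          ZMod.natCast_self, add_zero]
      rw [e, cycleSnoc_natCast_of_lt x hk, cycleSnoc_natCast_of_lt x (by omega), e']
      exact hP' k (n - 1) (by omega) (by omega) ℓ (by rw [Set.mem_uIcc]; omega)
  · have e : (t : ZMod (t + 1)) + n = (n - 1 : ℕ) := by
      rw [← Nat.cast_add, ← show n - 1 + (t + 1) = t + n by omega, Nat.cast_add,
        ZMod.natCast_self, add_zero]
    rw [e, cycleSnoc_natCast_self, cycleSnoc_natCast_of_lt x (by omega)]
    obtain ⟨p, hp, hl⟩ := hP.exists_isPath_to_inserted hf hTS hx (k := n - 1) (by omega)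
      (ℓ := ℓ) (by omega)
    exact ⟨p.reverse, hp.reverse, by rw [Walk.length_reverse, hl]⟩

namespace IsTrigonal

lemma le (h : IsTrigonal T B S) : B ≤ T := by
  induction h with
  | base => exact le_rfl
  | extend _ _ _ _ _ _ _ _ _ ih => exact sup_le_sup_right ((deleteEdges_le _).trans ih) _

lemma support_subset (h : IsTrigonal T B S) : T.support ⊆ S := by
  induction h with
  | base a b c =>
    rintro v ⟨w, hvw, -⟩
    simp only [Set.mem_insert_iff, Set.mem_singleton_iff] at hvw ⊢
    aesop
  | extend T B S a b x h _ hab ih =>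
    have hab' := h.le hab
    rintro v ⟨w, hvw | ⟨hvw, -⟩⟩
    · exact Set.mem_insert_of_mem x (ih ⟨w, hvw⟩)
    · simp only [Sym2.toRel_prop, Set.mem_insert_iff, Set.mem_singleton_iff, Sym2.eq_iff] at hvw
      obtain rfl | rfl | rfl : v = a ∨ v = x ∨ v = b := by tauto
      · exact Set.mem_insert_of_mem _ (ih ⟨_, hab'⟩)
      · exact Set.mem_insert _ _
      · exact Set.mem_insert_of_mem _ (ih ⟨_, hab'.symm⟩)

lemma exists_isCyclicEnum (h : IsTrigonal T B S) :
    ∃ (t : ℕ) (f : ZMod t → V), IsCyclicEnum B S f ∧ HasPathsBetweenArcs T f := by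
  induction h with
  | base a b c hab hbc hac =>
    have hf := isCyclicEnum_triangle hab hbc hac
    exact ⟨3, _, hf, hf.hasPathsBetweenArcs_of_eq_three rfl le_rfl⟩
  | extend T B S a b x h hx hab ih =>
    obtain ⟨t, f, hf, hP⟩ := ih
    obtain ⟨k, hk⟩ := (hf.adj_iff a b).1 hab
    -- rotate the enumeration so that the edge `ab` joins `f (-1)` and `f 0`
    have H₁ := (hf.comp_add_right (k + 1)).cycleSnoc hx
    have H₂ := (hP.comp_add_right (k + 1)).cycleSnoc (hf.comp_add_right (k + 1)) h.le
      h.support_subset hx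
    rw [show -1 + (k + 1) = k by ring, zero_add] at H₁ H₂
    rcases Sym2.eq_iff.1 hk with ⟨rfl, rfl⟩ | ⟨rfl, rfl⟩
    · exact ⟨_, _, H₁, H₂⟩
    · rw [Sym2.eq_swap (a := f (k + 1)), Set.pair_comm, Sym2.eq_swap (a := x),
        Sym2.eq_swap (a := f (k + 1)) (b := x)]
      exact ⟨_, _, H₁, H₂⟩

end IsTrigonal

end Boundary

/-- Proposition 3.2: path lengths in a trigonal graph. -/
theorem trigonal_paths {V : Type*} (T B : SimpleGraph V) (S : Set V) (t : ℕ)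
    (hT : IsTrigonal T B S) (hcard : S.ncard = t)
    (u v : V) (hu : u ∈ S) (hv : v ∈ S) (huv : u ≠ v) (d : ℕ) (hd : B.dist u v = d) :
    (∀ ℓ : ℕ, d ≤ ℓ → ℓ ≤ t - d → ∃ p : T.Walk u v, p.IsPath ∧ p.length = ℓ) ∧
    (B.Adj u v → ∀ ℓ : ℕ, 1 ≤ ℓ → ℓ ≤ t - 1 →
      ∃ p : T.Walk u v, p.IsPath ∧ p.length = ℓ) := by
  obtain ⟨t', f, hf, hP⟩ := hT.exists_isCyclicEnum
  obtain rfl : t = t' := hcard.symm.trans hf.ncard_eq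
  have key : ∀ ℓ, d ≤ ℓ → ℓ ≤ t - d → ∃ p : T.Walk u v, p.IsPath ∧ p.length = ℓ :=
    fun ℓ h₁ h₂ ↦ hf.exists_isPath_of_dist_le hP hu hv huv (hd ▸ h₁) (hd ▸ h₂)
  refine ⟨key, fun hadj ↦ ?_⟩
  rw [← dist_eq_one_iff_adj, hd] at hadj
  exact hadj ▸ key

end Dean
end

section
/- Let T be a tetragonal graph with boundary cycle ∂T and |V(T)| = 2m, and let u, v be two distinct vertices of T with dist_{∂T}(u, v) = d. Then for every integer ℓ with d ≤ ℓ ≤ 2m − d and ℓ ≡ d (mod 2), there exists a path in T from u to v of length ℓ. -/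
open SimpleGraph

namespace Dean

variable {V : Type*}

/-!
Label the boundary cycle of a tetragonal graph on `2n` vertices by `0, …, 2n - 1`; then
`dist_{∂T}` is the circular distance of the labels. The claim is proved along the recursive
construction. When the boundary edge `ab` is replaced by `axyb`, a path between old vertices either
already exists in the old graph or has the one new admissible length `2n + 2 - d`, which the longer
boundary arc realises; a path ending at `x` or `y` is an old path to `a` or `b` followed by one or
two new edges. Parity is never an obstruction because the boundary has even length, so `d` and
`2n - d` have the same parity.
-/

def cycDist (N i j : ℕ) : ℕ := min (Nat.dist i j) (N - Nat.dist i j)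

lemma cycDist_comm (N i j : ℕ) : cycDist N i j = cycDist N j i := by
  simp [cycDist, Nat.dist_comm]

lemma cycDist_triangle {N i j k : ℕ} (hi : i < N) (hj : j < N) (hk : k < N) :
    cycDist N i j ≤ cycDist N i k + cycDist N k j := by
  unfold cycDist Nat.dist
  omega

lemma succ_mod_eq (N i : ℕ) (hi : i < N) : (i + 1) % N = if i + 1 = N then 0 else i + 1 := by
  split_ifs with h
  · simp [h]
  · exact Nat.mod_eq_of_lt (by omega)

/-- `f 0, f 1, …, f (N - 1)` run once around the cycle `B`, whose vertex set is `S`. -/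
structure IsCycleLabeling (B : SimpleGraph V) (S : Set V) (N : ℕ) (f : ℕ → V) : Prop where
  injOn : Set.InjOn f (Set.Iio N)
  image_eq : f '' Set.Iio N = S
  adj_iff : ∀ u v, B.Adj u v ↔ ∃ i < N, s(u, v) = s(f i, f ((i + 1) % N))

namespace IsCycleLabeling

variable {B : SimpleGraph V} {S : Set V} {N : ℕ} {f : ℕ → V}

lemma mem (hf : IsCycleLabeling B S N f) {i : ℕ} (hi : i < N) : f i ∈ S :=
  hf.image_eq ▸ Set.mem_image_of_mem f hi

lemma exists_eq_of_mem (hf : IsCycleLabeling B S N f) {v : V} (hv : v ∈ S) :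
    ∃ i < N, f i = v := by
  rw [← hf.image_eq] at hv
  exact hv

lemma mem_of_adj (hf : IsCycleLabeling B S N f) {u v : V} (h : B.Adj u v) : v ∈ S := by
  obtain ⟨i, hi, he⟩ := (hf.adj_iff u v).1 h
  rcases Sym2.eq_iff.1 he with ⟨-, rfl⟩ | ⟨-, rfl⟩
  · exact hf.mem (Nat.mod_lt _ (by omega))
  · exact hf.mem hi

lemma ncard_eq (hf : IsCycleLabeling B S N f) : S.ncard = N := by
  rw [← hf.image_eq, hf.injOn.ncard_image, Set.ncard_Iio_nat]

lemma adj_succ (hf : IsCycleLabeling B S N f) {i : ℕ} (hi : i < N) :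
    B.Adj (f i) (f ((i + 1) % N)) :=
  (hf.adj_iff _ _).2 ⟨i, hi, rfl⟩

lemma cycDist_le_one_of_adj (hf : IsCycleLabeling B S N f) {i j : ℕ} (hi : i < N) (hj : j < N)
    (h : B.Adj (f i) (f j)) : cycDist N i j ≤ 1 := by
  obtain ⟨k, hk, he⟩ := (hf.adj_iff _ _).1 h
  have hk' : (k + 1) % N < N := Nat.mod_lt _ (by omega)
  have hsucc := succ_mod_eq N k hk
  rcases Sym2.eq_iff.1 he with ⟨h1, h2⟩ | ⟨h1, h2⟩
  · have hik := hf.injOn hi hk h1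
    have hjk := hf.injOn hj hk' h2
    unfold cycDist Nat.dist
    split_ifs at hsucc <;> omega
  · have hik := hf.injOn hi hk' h1
    have hjk := hf.injOn hj hk h2
    unfold cycDist Nat.dist
    split_ifs at hsucc <;> omega

lemma cycDist_le_length (hf : IsCycleLabeling B S N f) {u v : V} (p : B.Walk u v) {i j : ℕ}
    (hi : i < N) (hj : j < N) (hu : f i = u) (hv : f j = v) : cycDist N i j ≤ p.length := by
  induction p generalizing i with
  | nil =>
    obtain rfl := hf.injOn hi hj (hu.trans hv.symm)
    simp [cycDist]
  | cons h p ih =>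
    obtain ⟨k, hk, rfl⟩ := hf.exists_eq_of_mem (hf.mem_of_adj h)
    subst hu
    have hik := hf.cycDist_le_one_of_adj hi hk h
    have hkj := ih hk rfl hv
    have htri := cycDist_triangle hi hj hk
    rw [Walk.length_cons]
    omega

lemma exists_walk_support (hf : IsCycleLabeling B S N f) (hN : 0 < N) (i k : ℕ) :
    ∃ p : B.Walk (f (i % N)) (f ((i + k) % N)),
      p.support = (List.range (k + 1)).map fun t => f ((i + t) % N) := by
  induction k with
  | zero => exact ⟨.nil, by simp⟩
  | succ k ih =>
    obtain ⟨p, hp⟩ := ih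
    have h := hf.adj_succ (Nat.mod_lt (i + k) hN)
    rw [Nat.mod_add_mod] at h
    refine ⟨p.concat h, ?_⟩
    rw [Walk.support_concat, hp, List.range_succ (n := k + 1), List.map_append]
    rfl

lemma exists_isPath_length (hf : IsCycleLabeling B S N f) {i k : ℕ} (hi : i < N) (hk : k < N) :
    ∃ p : B.Walk (f i) (f ((i + k) % N)), p.IsPath ∧ p.length = k := by
  obtain ⟨p, hp⟩ := hf.exists_walk_support (by omega) i k
  have hi' : f (i % N) = f i := by rw [Nat.mod_eq_of_lt hi]
  have hpath : (p.copy hi' rfl).IsPath := by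
    rw [Walk.isPath_def, Walk.support_copy, hp]
    refine List.Nodup.map_on (fun t ht t' ht' he => ?_) List.nodup_range
    rw [List.mem_range] at ht ht'
    have hmod : (i + t) % N = (i + t') % N :=
      hf.injOn (Nat.mod_lt _ (by omega)) (Nat.mod_lt _ (by omega)) he
    have htt' := Nat.ModEq.add_left_cancel' i hmod
    rwa [Nat.ModEq, Nat.mod_eq_of_lt (by omega), Nat.mod_eq_of_lt (by omega)] at htt'
  refine ⟨_, hpath, ?_⟩
  rw [Walk.length_copy, ← Nat.add_right_cancel_iff (n := 1), ← Walk.length_support, hp]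
  simp

lemma exists_isPath_arc (hf : IsCycleLabeling B S N f) {i j ℓ : ℕ} (hi : i < N) (hj : j < N)
    (hij : i ≠ j) (hℓ : ℓ = cycDist N i j ∨ ℓ = N - cycDist N i j) :
    ∃ p : B.Walk (f i) (f j), p.IsPath ∧ p.length = ℓ := by
  wlog hlt : i < j generalizing i j
  · obtain ⟨p, hp, hl⟩ := this hj hi hij.symm (by rwa [cycDist_comm]) (by omega)
    exact ⟨p.reverse, hp.reverse, by rw [Walk.length_reverse, hl]⟩
  have hℓ' : ℓ = j - i ∨ ℓ = N - (j - i) := by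
    unfold cycDist Nat.dist at hℓ
    omega
  rcases hℓ' with rfl | rfl
  · have := hf.exists_isPath_length hi (k := j - i) (by omega)
    rwa [Nat.add_sub_cancel' hlt.le, Nat.mod_eq_of_lt hj] at this
  · have := hf.exists_isPath_length hj (k := N - (j - i)) (by omega)
    rw [show j + (N - (j - i)) = i + N by omega, Nat.add_mod_right, Nat.mod_eq_of_lt hi] at this
    obtain ⟨p, hp, hl⟩ := this
    exact ⟨p.reverse, hp.reverse, by rw [Walk.length_reverse, hl]⟩

lemma dist_eq (hf : IsCycleLabeling B S N f) {i j : ℕ} (hi : i < N) (hj : j < N) :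
    B.dist (f i) (f j) = cycDist N i j := by
  rcases eq_or_ne i j with rfl | hij
  · simp [cycDist]
  obtain ⟨p, -, hp⟩ := hf.exists_isPath_arc hi hj hij (Or.inl rfl)
  obtain ⟨q, hq⟩ := p.reachable.exists_walk_length_eq_dist
  exact le_antisymm (hp ▸ dist_le p) (hq ▸ hf.cycDist_le_length q hi hj rfl rfl)

end IsCycleLabeling

lemma injOn_add_mod (N r : ℕ) : Set.InjOn (fun i => (i + r) % N) (Set.Iio N) := by
  intro i hi j hj h
  have hij := Nat.ModEq.add_right_cancel' r h
  rwa [Nat.ModEq, Nat.mod_eq_of_lt hi, Nat.mod_eq_of_lt hj] at hij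

lemma image_add_mod (N r : ℕ) : (fun i => (i + r) % N) '' Set.Iio N = Set.Iio N := by
  have hsub : (fun i => (i + r) % N) '' Set.Iio N ⊆ Set.Iio N := by
    rintro _ ⟨i, hi, rfl⟩
    exact Nat.mod_lt _ (Nat.zero_lt_of_lt hi)
  exact Set.eq_of_subset_of_ncard_le hsub (by rw [(injOn_add_mod N r).ncard_image])
    (Set.finite_Iio N)

lemma ne_of_sym2_eq {u v p q : V} (he : s(u, v) = s(p, q)) (hpq : p ≠ q) : u ≠ v :=
  fun huv => hpq (Sym2.mk_isDiag_iff.1 (he ▸ Sym2.mk_isDiag_iff.2 huv))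

def appendPair (f : ℕ → V) (N : ℕ) (x y : V) : ℕ → V :=
  Function.update (Function.update f N x) (N + 1) y

section appendPair

variable {f : ℕ → V} {N : ℕ} {x y : V}

lemma appendPair_of_lt {i : ℕ} (hi : i < N) : appendPair f N x y i = f i := by
  simp only [appendPair, Function.update_apply]
  split_ifs <;> first | rfl | omega

@[simp] lemma appendPair_self : appendPair f N x y N = x := by simp [appendPair]

@[simp] lemma appendPair_succ : appendPair f N x y (N + 1) = y := by simp [appendPair]

end appendPair

namespace IsCycleLabeling

variable {B : SimpleGraph V} {S : Set V} {N : ℕ} {f : ℕ → V}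

lemma rotate (hf : IsCycleLabeling B S N f) (r : ℕ) :
    IsCycleLabeling B S N (fun i => f ((i + r) % N)) where
  injOn i hi j hj h :=
    injOn_add_mod N r hi hj
      (hf.injOn (Nat.mod_lt _ (Nat.zero_lt_of_lt hi)) (Nat.mod_lt _ (Nat.zero_lt_of_lt hj)) h)
  image_eq := by
    rw [← Set.image_image f (fun i => (i + r) % N), image_add_mod, hf.image_eq]
  adj_iff u v := by
    have hsucc : ∀ i, ((i + 1) % N + r) % N = ((i + r) % N + 1) % N := fun i => by
      rw [Nat.mod_add_mod, Nat.mod_add_mod, Nat.add_right_comm]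
    have h := Set.exists_mem_image (f := fun i => (i + r) % N) (s := Set.Iio N)
      (p := fun m => s(u, v) = s(f m, f ((m + 1) % N)))
    rw [image_add_mod] at h
    simpa only [hf.adj_iff, Set.mem_Iio, hsucc] using h

lemma exists_rotate_of_adj (hf : IsCycleLabeling B S N f) {a b : V} (hab : B.Adj a b) :
    ∃ f', IsCycleLabeling B S N f' ∧ s(a, b) = s(f' (N - 1), f' 0) := by
  obtain ⟨m, hm, he⟩ := (hf.adj_iff a b).1 hab
  refine ⟨_, hf.rotate (m + 1), ?_⟩
  rwa [show N - 1 + (m + 1) = m + N by omega, Nat.add_mod_right, Nat.mod_eq_of_lt hm, zero_add]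

lemma edge_ne_wrap_edge (hf : IsCycleLabeling B S N f) (hN : 3 ≤ N) {i : ℕ} (hi : i < N - 1) :
    s(f i, f (i + 1)) ≠ s(f (N - 1), f 0) := by
  have hmem : ∀ k < N, k ∈ Set.Iio N := fun k hk => hk
  intro he
  rcases Sym2.eq_iff.1 he with ⟨h1, -⟩ | ⟨h1, h2⟩
  · have hi' := hf.injOn (hmem i (by omega)) (hmem (N - 1) (by omega)) h1
    omega
  · have hi0 := hf.injOn (hmem i (by omega)) (hmem 0 (by omega)) h1
    have hi1 := hf.injOn (hmem (i + 1) (by omega)) (hmem (N - 1) (by omega)) h2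
    omega

lemma extend_adj_iff (hf : IsCycleLabeling B S N f) (hN : 3 ≤ N) {x y : V} (hx : x ∉ S)
    (hy : y ∉ S) (hxy : x ≠ y) (u v : V) :
    (B.deleteEdges {s(f (N - 1), f 0)} ⊔
        fromEdgeSet {s(f (N - 1), x), s(x, y), s(y, f 0)}).Adj u v ↔
      ∃ i < N + 2, s(u, v) = s(appendPair f N x y i, appendPair f N x y ((i + 1) % (N + 2))) := by
  have hsucc : ∀ i < N - 1, (i + 1) % (N + 2) = i + 1 ∧ (i + 1) % N = i + 1 := fun i hi =>
    ⟨Nat.mod_eq_of_lt (by omega), Nat.mod_eq_of_lt (by omega)⟩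
  have hx' : appendPair f N x y ((N - 1 + 1) % (N + 2)) = x := by
    rw [Nat.sub_add_cancel (by omega), Nat.mod_eq_of_lt (by omega), appendPair_self]
  have hy' : appendPair f N x y ((N + 1) % (N + 2)) = y := by
    rw [Nat.mod_eq_of_lt (by omega), appendPair_succ]
  have hb' : appendPair f N x y ((N + 1 + 1) % (N + 2)) = f 0 := by
    rw [Nat.mod_self, appendPair_of_lt (by omega)]
  simp only [sup_adj, deleteEdges_adj, fromEdgeSet_adj, hf.adj_iff, Set.mem_insert_iff,
    Set.mem_singleton_iff]
  constructor
  · rintro (⟨⟨i, hi, he⟩, hne⟩ | ⟨he | he | he, -⟩)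
    · have hi' : i < N - 1 := by
        by_contra hi'
        obtain rfl : i = N - 1 := by omega
        exact hne (he.trans (by rw [Nat.sub_add_cancel (by omega), Nat.mod_self]))
      refine ⟨i, by omega, ?_⟩
      rw [(hsucc i hi').1, appendPair_of_lt (by omega), appendPair_of_lt (by omega), he,
        (hsucc i hi').2]
    · exact ⟨N - 1, by omega, by rw [hx', appendPair_of_lt (by omega), he]⟩
    · exact ⟨N, by omega, by rw [hy', appendPair_self, he]⟩
    · exact ⟨N + 1, by omega, by rw [hb', appendPair_succ, he]⟩
  · rintro ⟨i, hi, he⟩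
    rcases (by omega : i < N - 1 ∨ i = N - 1 ∨ i = N ∨ i = N + 1) with hi' | rfl | rfl | rfl
    · rw [(hsucc i hi').1, appendPair_of_lt (by omega), appendPair_of_lt (by omega)] at he
      exact Or.inl ⟨⟨i, by omega, by rw [(hsucc i hi').2, he]⟩, he ▸ hf.edge_ne_wrap_edge hN hi'⟩
    · rw [hx', appendPair_of_lt (by omega)] at he
      exact Or.inr ⟨Or.inl he, ne_of_sym2_eq he (ne_of_mem_of_not_mem (hf.mem (by omega)) hx)⟩
    · rw [hy', appendPair_self] at he
      exact Or.inr ⟨Or.inr (Or.inl he), ne_of_sym2_eq he hxy⟩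
    · rw [hb', appendPair_succ] at he
      exact Or.inr ⟨Or.inr (Or.inr he),
        ne_of_sym2_eq he (ne_of_mem_of_not_mem (hf.mem (by omega)) hy).symm⟩

lemma extend (hf : IsCycleLabeling B S N f) (hN : 3 ≤ N) {x y : V} (hx : x ∉ S) (hy : y ∉ S)
    (hxy : x ≠ y) :
    IsCycleLabeling (B.deleteEdges {s(f (N - 1), f 0)} ⊔
        fromEdgeSet {s(f (N - 1), x), s(x, y), s(y, f 0)})
      (insert x (insert y S)) (N + 2) (appendPair f N x y) := by
  have himg : appendPair f N x y '' Set.Iio N = S :=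
    hf.image_eq ▸ Set.image_congr fun i hi => appendPair_of_lt hi
  have hIio : Set.Iio (N + 2) = insert (N + 1) (insert N (Set.Iio N)) := by
    ext i
    simp only [Set.mem_Iio, Set.mem_insert_iff]
    omega
  refine ⟨?_, ?_, hf.extend_adj_iff hN hx hy hxy⟩
  · rw [hIio, Set.injOn_insert (by simp only [Set.mem_insert_iff, Set.mem_Iio]; omega),
      Set.injOn_insert (by simp), Set.image_insert_eq, himg, appendPair_self, appendPair_succ]
    exact ⟨⟨hf.injOn.congr fun i hi => (appendPair_of_lt hi).symm, hx⟩, by simp [hy, hxy.symm]⟩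
  · rw [hIio, Set.image_insert_eq, Set.image_insert_eq, himg, appendPair_self, appendPair_succ,
      Set.insert_comm]

end IsCycleLabeling

lemma exists_lt_four_iff {P : ℕ → Prop} : (∃ i < 4, P i) ↔ P 0 ∨ P 1 ∨ P 2 ∨ P 3 := by
  constructor
  · rintro ⟨i, hi, h⟩
    interval_cases i <;> simp [h]
  · rintro (h | h | h | h) <;> exact ⟨_, by norm_num, h⟩

lemma isCycleLabeling_four {a b c d : V} (hab : a ≠ b) (hac : a ≠ c) (had : a ≠ d)
    (hbc : b ≠ c) (hbd : b ≠ d) (hcd : c ≠ d) :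
    IsCycleLabeling (fromEdgeSet {s(a, b), s(b, c), s(c, d), s(d, a)}) {a, b, c, d} 4
      (fun i => if i = 0 then a else if i = 1 then b else if i = 2 then c else d) where
  injOn i hi j hj h := by
    simp only [Set.mem_Iio] at hi hj
    interval_cases i <;> interval_cases j <;> simp_all [eq_comm]
  image_eq := by
    ext v
    simp only [Set.mem_image, Set.mem_Iio, exists_lt_four_iff]
    simp [eq_comm]
  adj_iff u v := by
    simp only [fromEdgeSet_adj, exists_lt_four_iff, Set.mem_insert_iff, Sym2.eq, Sym2.rel_iff', Prod.mk.injEq, Prod.swap_prod_mk,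
      Set.mem_singleton_iff, ne_eq, ↓reduceIte, zero_add, Nat.one_mod, one_ne_zero, Nat.reduceAdd,
      Nat.reduceMod, OfNat.ofNat_ne_zero, OfNat.ofNat_ne_one, Nat.mod_succ, Nat.succ_ne_self,
      and_iff_left_iff_imp]
    rintro ((⟨rfl, rfl⟩ | ⟨rfl, rfl⟩) | (⟨rfl, rfl⟩ | ⟨rfl, rfl⟩) | (⟨rfl, rfl⟩ | ⟨rfl, rfl⟩) |
      ⟨rfl, rfl⟩ | ⟨rfl, rfl⟩) <;> simp_all [eq_comm]

def HasPathWithin (G : SimpleGraph V) (s : Set V) (u v : V) (ℓ : ℕ) : Prop :=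
  ∃ p : G.Walk u v, p.IsPath ∧ p.length = ℓ ∧ ∀ z ∈ p.support, z ∈ s

namespace HasPathWithin

variable {G G' : SimpleGraph V} {s : Set V} {u v w : V} {ℓ : ℕ}

lemma exists_isPath (h : HasPathWithin G s u v ℓ) : ∃ p : G.Walk u v, p.IsPath ∧ p.length = ℓ :=
  let ⟨p, hp, hl, _⟩ := h
  ⟨p, hp, hl⟩

lemma mono (h : HasPathWithin G s u v ℓ) (hG : G ≤ G') : HasPathWithin G' s u v ℓ :=
  let ⟨p, hp, hl, hs⟩ := h
  ⟨p.mapLe hG, hp.mapLe hG, by rw [Walk.length_mapLe, hl],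
    by rwa [Walk.support_mapLe_eq_support]⟩

lemma symm (h : HasPathWithin G s u v ℓ) : HasPathWithin G s v u ℓ :=
  let ⟨p, hp, hl, hs⟩ := h
  ⟨p.reverse, hp.reverse, by rw [Walk.length_reverse, hl],
    fun z hz => hs z (by rwa [Walk.support_reverse, List.mem_reverse] at hz)⟩

lemma concat (h : HasPathWithin G s u v ℓ) (hvw : G.Adj v w) (hw : w ∉ s) :
    HasPathWithin G (insert w s) u w (ℓ + 1) := by
  obtain ⟨p, hp, rfl, hs⟩ := h
  refine ⟨p.concat hvw, hp.concat (fun hw' => hw (hs w hw')) hvw,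
    Walk.length_concat p hvw, fun z hz => ?_⟩
  rw [Walk.support_concat, List.mem_append, List.mem_singleton] at hz
  rcases hz with hz | rfl
  exacts [Set.mem_insert_of_mem w (hs z hz), Set.mem_insert z s]

end HasPathWithin

lemma _root_.SimpleGraph.Walk.mem_of_mem_support_of_adj_mem {G : SimpleGraph V} {s : Set V}
    (hG : ∀ ⦃u v⦄, G.Adj u v → v ∈ s) {u v : V} (p : G.Walk u v) (hu : u ∈ s) :
    ∀ z ∈ p.support, z ∈ s := by
  induction p with
  | nil => simpa using hu
  | cons h p ih =>
    intro z hz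
    rw [Walk.support_cons, List.mem_cons] at hz
    rcases hz with rfl | hz
    exacts [hu, ih (hG h) z hz]

def HasBoundaryPaths (T B : SimpleGraph V) (S : Set V) : Prop :=
  ∀ u ∈ S, ∀ v ∈ S, u ≠ v → ∀ ℓ, B.dist u v ≤ ℓ → ℓ ≤ S.ncard - B.dist u v →
    ℓ % 2 = B.dist u v % 2 → ∃ p : T.Walk u v, p.IsPath ∧ p.length = ℓ

def HasCyclePaths (T : SimpleGraph V) (S : Set V) (N : ℕ) (f : ℕ → V) : Prop :=
  ∀ i < N, ∀ j < N, i ≠ j → ∀ ℓ,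
    cycDist N i j ≤ ℓ ∧ ℓ ≤ N - cycDist N i j ∧ ℓ % 2 = cycDist N i j % 2 →
      HasPathWithin T S (f i) (f j) ℓ

namespace IsCycleLabeling

variable {T B : SimpleGraph V} {S : Set V} {N : ℕ} {f : ℕ → V}

lemma hasCyclePaths (hf : IsCycleLabeling B S N f) (hTS : ∀ ⦃u v⦄, T.Adj u v → v ∈ S)
    (hP : HasBoundaryPaths T B S) : HasCyclePaths T S N f := by
  intro i hi j hj hij ℓ ⟨h1, h2, h3⟩
  rw [← hf.dist_eq hi hj] at h1 h2 h3
  rw [← hf.ncard_eq] at h2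
  obtain ⟨p, hp, hl⟩ :=
    hP _ (hf.mem hi) _ (hf.mem hj) (fun he => hij (hf.injOn hi hj he)) ℓ h1 h2 h3
  exact ⟨p, hp, hl, p.mem_of_mem_support_of_adj_mem hTS (hf.mem hi)⟩

lemma hasBoundaryPaths_of_forall_lt (hf : IsCycleLabeling B S N f)
    (h : ∀ i j ℓ, i < j → j < N → cycDist N i j ≤ ℓ → ℓ ≤ N - cycDist N i j →
      ℓ % 2 = cycDist N i j % 2 → ∃ p : T.Walk (f i) (f j), p.IsPath ∧ p.length = ℓ) :
    HasBoundaryPaths T B S := by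
  intro u hu v hv huv ℓ
  obtain ⟨i, hi, rfl⟩ := hf.exists_eq_of_mem hu
  obtain ⟨j, hj, rfl⟩ := hf.exists_eq_of_mem hv
  rw [hf.dist_eq hi hj, hf.ncard_eq]
  rcases lt_or_gt_of_ne (fun he : i = j => huv (he ▸ rfl)) with hij | hij
  · exact h i j ℓ hij hj
  · rw [cycDist_comm]
    intro h1 h2 h3
    obtain ⟨p, hp, hl⟩ := h j i ℓ hij hi h1 h2 h3
    exact ⟨p.reverse, hp.reverse, by rw [Walk.length_reverse, hl]⟩

lemma hasBoundaryPaths_self_of_four (hf : IsCycleLabeling B S 4 f) : HasBoundaryPaths B B S :=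
  hf.hasBoundaryPaths_of_forall_lt fun i j ℓ hij hj h1 h2 h3 =>
    hf.exists_isPath_arc (by omega) hj hij.ne (by unfold cycDist Nat.dist at *; omega)

end IsCycleLabeling

lemma deleteEdges_sup_le_sup {B T G : SimpleGraph V} (s : Set (Sym2 V)) (h : B ≤ T) :
    B.deleteEdges s ⊔ G ≤ T ⊔ G :=
  sup_le_sup ((deleteEdges_le s).trans h) le_rfl

lemma sup_fromEdgeSet_adj_of_mem {G : SimpleGraph V} {s : Set (Sym2 V)} {u v : V}
    (h : s(u, v) ∈ s) (huv : u ≠ v) : (G ⊔ fromEdgeSet s).Adj u v :=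
  Or.inr ⟨h, huv⟩

namespace HasCyclePaths

variable {T T' : SimpleGraph V} {S : Set V} {n : ℕ} {f : ℕ → V} {x y : V}

lemma exists_path_to_fst (hP : HasCyclePaths T S (2 * n) f) (hT : T ≤ T')
    (hax : T'.Adj (f (2 * n - 1)) x) (hby : T'.Adj (f 0) y) (hyx : T'.Adj y x)
    (hx : x ∉ S) (hy : y ∉ S) (hxy : x ≠ y) {i ℓ : ℕ} (hi : i < 2 * n)
    (hℓ : cycDist (2 * n + 2) i (2 * n) < ℓ ∧ ℓ < 2 * n + 2 - cycDist (2 * n + 2) i (2 * n) ∧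
      ℓ % 2 = cycDist (2 * n + 2) i (2 * n) % 2) :
    ∃ p : T'.Walk (f i) x, p.IsPath ∧ p.length = ℓ := by
  unfold cycDist Nat.dist at hℓ
  rcases (by omega : i = 2 * n - 1 ∨ i < 2 * n - 1) with rfl | hi'
  · have hab := hP (2 * n - 1) hi 0 (by omega) (by omega) (ℓ - 2)
      (by unfold cycDist Nat.dist; omega)
    obtain ⟨p, hp, hl⟩ :=
      (((hab.mono hT).concat hby hy).concat hyx (by simp [hx, hxy])).exists_isPath
    exact ⟨p, hp, by omega⟩
  · have hia := hP i hi (2 * n - 1) (by omega) (by omega) (ℓ - 1)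
      (by unfold cycDist Nat.dist; omega)
    obtain ⟨p, hp, hl⟩ := ((hia.mono hT).concat hax hx).exists_isPath
    exact ⟨p, hp, by omega⟩

lemma exists_path_to_snd (hP : HasCyclePaths T S (2 * n) f) (hT : T ≤ T')
    (hax : T'.Adj (f (2 * n - 1)) x) (hby : T'.Adj (f 0) y) (hxy' : T'.Adj x y)
    (hx : x ∉ S) (hy : y ∉ S) (hxy : x ≠ y) {i ℓ : ℕ} (hi : i < 2 * n)
    (hℓ : cycDist (2 * n + 2) i (2 * n + 1) < ℓ ∧
      ℓ < 2 * n + 2 - cycDist (2 * n + 2) i (2 * n + 1) ∧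
      ℓ % 2 = cycDist (2 * n + 2) i (2 * n + 1) % 2) :
    ∃ p : T'.Walk (f i) y, p.IsPath ∧ p.length = ℓ := by
  unfold cycDist Nat.dist at hℓ
  rcases Nat.eq_zero_or_pos i with rfl | hi'
  · have hba := hP 0 hi (2 * n - 1) (by omega) (by omega) (ℓ - 2)
      (by unfold cycDist Nat.dist; omega)
    obtain ⟨p, hp, hl⟩ :=
      (((hba.mono hT).concat hax hx).concat hxy' (by simp [hy, hxy.symm])).exists_isPath
    exact ⟨p, hp, by omega⟩
  · have hib := hP i hi 0 (by omega) (by omega) (ℓ - 1)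
      (by unfold cycDist Nat.dist; omega)
    obtain ⟨p, hp, hl⟩ := ((hib.mono hT).concat hby hy).exists_isPath
    exact ⟨p, hp, by omega⟩

lemma exists_path_fst_snd (hP : HasCyclePaths T S (2 * n) f) (hT : T ≤ T')
    (hax : T'.Adj (f (2 * n - 1)) x) (hby : T'.Adj (f 0) y)
    (hx : x ∉ S) (hy : y ∉ S) (hxy : x ≠ y) (hn : 0 < n) {ℓ : ℕ}
    (h1 : 1 < ℓ) (h2 : ℓ < 2 * n + 1) (h3 : ℓ % 2 = 1) :
    ∃ p : T'.Walk x y, p.IsPath ∧ p.length = ℓ := by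
  have hab := hP (2 * n - 1) (by omega) 0 (by omega) (by omega) (ℓ - 2)
    (by unfold cycDist Nat.dist; omega)
  obtain ⟨p, hp, hl⟩ :=
    (((hab.mono hT).concat hby hy).symm.concat hax (by simp [hx, hxy])).symm.exists_isPath
  exact ⟨p, hp, by omega⟩

end HasCyclePaths

lemma HasBoundaryPaths.extend {T B : SimpleGraph V} {S : Set V} {n : ℕ} {f : ℕ → V} {x y : V}
    (hf : IsCycleLabeling B S (2 * n) f) (hn : 2 ≤ n) (hTS : ∀ ⦃u v⦄, T.Adj u v → v ∈ S)
    (hBT : B ≤ T) (hP : HasBoundaryPaths T B S) (hx : x ∉ S) (hy : y ∉ S) (hxy : x ≠ y) :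
    HasBoundaryPaths (T ⊔ fromEdgeSet {s(f (2 * n - 1), x), s(x, y), s(y, f 0)})
      (B.deleteEdges {s(f (2 * n - 1), f 0)} ⊔
        fromEdgeSet {s(f (2 * n - 1), x), s(x, y), s(y, f 0)})
      (insert x (insert y S)) := by
  set E : Set (Sym2 V) := {s(f (2 * n - 1), x), s(x, y), s(y, f 0)} with hE
  have hg := hf.extend (by omega) hx hy hxy
  have hold := hf.hasCyclePaths hTS hP
  have hT : T ≤ T ⊔ fromEdgeSet E := le_sup_left
  have hB : B.deleteEdges {s(f (2 * n - 1), f 0)} ⊔ fromEdgeSet E ≤ T ⊔ fromEdgeSet E :=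
    deleteEdges_sup_le_sup _ hBT
  have hax : (T ⊔ fromEdgeSet E).Adj (f (2 * n - 1)) x :=
    sup_fromEdgeSet_adj_of_mem (by simp [hE]) (ne_of_mem_of_not_mem (hf.mem (by omega)) hx)
  have hxy' : (T ⊔ fromEdgeSet E).Adj x y := sup_fromEdgeSet_adj_of_mem (by simp [hE]) hxy
  have hby : (T ⊔ fromEdgeSet E).Adj (f 0) y :=
    (sup_fromEdgeSet_adj_of_mem (u := y) (by simp [hE])
      (ne_of_mem_of_not_mem (hf.mem (by omega)) hy).symm).symm
  refine hg.hasBoundaryPaths_of_forall_lt fun i j ℓ hij hj h1 h2 h3 => ?_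
  by_cases harc : ℓ = cycDist (2 * n + 2) i j ∨ ℓ = 2 * n + 2 - cycDist (2 * n + 2) i j
  · obtain ⟨p, hp, hl⟩ := hg.exists_isPath_arc (hij.trans hj) hj hij.ne harc
    exact ⟨p.mapLe hB, hp.mapLe hB, by rw [Walk.length_mapLe, hl]⟩
  rcases (by omega : j < 2 * n ∨ j = 2 * n ∨ j = 2 * n + 1) with hj' | rfl | rfl
  · rw [appendPair_of_lt (hij.trans hj'), appendPair_of_lt hj']
    exact ((hold i (hij.trans hj') j hj' hij.ne ℓ (by unfold cycDist Nat.dist at *; omega)).mono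
      hT).exists_isPath
  · rw [appendPair_of_lt hij, appendPair_self]
    exact hold.exists_path_to_fst hT hax hby hxy'.symm hx hy hxy hij (by omega)
  · rcases (by omega : i = 2 * n ∨ i < 2 * n) with rfl | hi
    · rw [appendPair_self, appendPair_succ]
      unfold cycDist Nat.dist at h1 h2 h3 harc
      exact hold.exists_path_fst_snd hT hax hby hx hy hxy (by omega) (by omega) (by omega)
        (by omega)
    · rw [appendPair_of_lt hi, appendPair_succ]
      exact hold.exists_path_to_snd hT hax hby hxy' hx hy hxy hi (by omega)

lemma pathEdges_reverse (a x y b : V) :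
    ({s(a, x), s(x, y), s(y, b)} : Set (Sym2 V)) = {s(b, y), s(y, x), s(x, a)} := by
  ext e
  simp only [Set.mem_insert_iff, Set.mem_singleton_iff]
  rw [@Sym2.eq_swap _ b y, @Sym2.eq_swap _ y x, @Sym2.eq_swap _ x a]
  tauto

structure TetragonalInvariant (T B : SimpleGraph V) (S : Set V) : Prop where
  exists_labeling : ∃ n f, 2 ≤ n ∧ IsCycleLabeling B S (2 * n) f
  mem_of_adj : ∀ ⦃u v⦄, T.Adj u v → v ∈ S
  le : B ≤ T
  hasBoundaryPaths : HasBoundaryPaths T B S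

lemma TetragonalInvariant.extend {T B : SimpleGraph V} {S : Set V} (hI : TetragonalInvariant T B S)
    {a b x y : V} (hx : x ∉ S) (hy : y ∉ S) (hxy : x ≠ y) (hab : B.Adj a b) :
    TetragonalInvariant (T ⊔ fromEdgeSet {s(a, x), s(x, y), s(y, b)})
      (B.deleteEdges {s(a, b)} ⊔ fromEdgeSet {s(a, x), s(x, y), s(y, b)})
      (insert x (insert y S)) := by
  obtain ⟨n, f, hn, hf⟩ := hI.exists_labeling
  obtain ⟨f, hf, he⟩ := hf.exists_rotate_of_adj hab
  wlog hf' : a = f (2 * n - 1) ∧ b = f 0 generalizing a b x y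
  · -- otherwise `f` meets the edge the other way round: insert the path as `b y x a`
    obtain ⟨rfl, rfl⟩ : b = f (2 * n - 1) ∧ a = f 0 := by
      rcases Sym2.eq_iff.1 he with h | h
      exacts [absurd h hf', h.symm]
    rw [pathEdges_reverse (f 0), @Sym2.eq_swap _ (f 0) (f (2 * n - 1)), Set.insert_comm x]
    exact this hy hx hxy.symm hab.symm (Sym2.eq_swap.trans he) ⟨rfl, rfl⟩
  obtain ⟨rfl, rfl⟩ := hf'
  have hg := hf.extend (by omega) hx hy hxy
  rw [show 2 * n + 2 = 2 * (n + 1) by ring] at hg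
  refine ⟨⟨n + 1, _, by omega, hg⟩, fun u v h => ?_, deleteEdges_sup_le_sup _ hI.le,
    hI.hasBoundaryPaths.extend hf hn hI.mem_of_adj hI.le hx hy hxy⟩
  rcases h with h | h
  exacts [Set.mem_insert_of_mem _ (Set.mem_insert_of_mem _ (hI.mem_of_adj h)),
    hg.mem_of_adj (Or.inr h)]

lemma IsTetragonal.tetragonalInvariant {T B : SimpleGraph V} {S : Set V} (h : IsTetragonal T B S) :
    TetragonalInvariant T B S := by
  induction h with
  | base a b c d hab hac had hbc hbd hcd =>
    have hf := isCycleLabeling_four hab hac had hbc hbd hcd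
    exact ⟨⟨2, _, le_rfl, hf⟩, fun _ _ h => hf.mem_of_adj h, le_rfl, hf.hasBoundaryPaths_self_of_four⟩
  | extend T B S a b x y _ hx hy hxy hab ih => exact ih.extend hx hy hxy hab

/-- Proposition 3.5: path lengths in a tetragonal graph. -/
theorem tetragonal_paths {V : Type*} (T B : SimpleGraph V) (S : Set V) (m : ℕ)
    (hT : IsTetragonal T B S) (hcard : S.ncard = 2 * m)
    (u v : V) (hu : u ∈ S) (hv : v ∈ S) (huv : u ≠ v) (d : ℕ) (hd : B.dist u v = d) :
    ∀ ℓ : ℕ, d ≤ ℓ → ℓ ≤ 2 * m - d → ℓ % 2 = d % 2 →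
      ∃ p : T.Walk u v, p.IsPath ∧ p.length = ℓ := by
  subst hd
  rw [← hcard]
  exact hT.tetragonalInvariant.hasBoundaryPaths u hu v hv huv

end Dean
end

section
/- Let G be a finite simple bipartite graph and let T be an optimal tetragonal subgraph of G with |V(T)| = 2m ≥ 6. Then for every vertex v of G not in V(T), the number of neighbors of v in V(T) is at most m; moreover, if some vertex v outside V(T) has exactly m neighbors in V(T), then the subgraph of G induced by V(T) is isomorphic to the complete bipartite graph K_{m,m}. -/
open SimpleGraph

namespace Dean

variable {V : Type*}

/-!
Fix a proper `2`-colouring of `G`. Each extension step of a tetragonal graph adds two adjacent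
vertices, one of each colour, so both colour classes of `S` have `m` vertices; a vertex `v ∉ S`
only sees the class opposite to its own, whence the bound. If `v` sees that whole class, then for
every `y ∈ S` of `v`'s colour the transposition `swap y v` carries `T` to a tetragonal subgraph
of `G` on `S - y + v`. Edge-maximality of `S` then gives `y` at least as many neighbours in `S`
as `v`, i.e. `y` is joined to the whole opposite class, and `G[S] ≅ K_{m,m}`.
-/

section Map

variable {W : Type*}

theorem map_sup (f : V ↪ W) (G H : SimpleGraph V) : (G ⊔ H).map f = G.map f ⊔ H.map f := by
  ext u w
  simp only [map_adj, sup_adj]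
  aesop

theorem map_fromEdgeSet (f : V ↪ W) (s : Set (Sym2 V)) :
    (fromEdgeSet s).map f = fromEdgeSet (f.sym2Map '' s) := by
  ext u w
  simp only [map_adj, fromEdgeSet_adj, Set.mem_image]
  constructor
  · rintro ⟨u, w, ⟨hs, hne⟩, rfl, rfl⟩
    exact ⟨⟨s(u, w), hs, rfl⟩, f.injective.ne hne⟩
  · rintro ⟨⟨e, hs, he⟩, hne⟩
    induction e using Sym2.ind with | _ p q =>
    rcases Sym2.eq_iff.1 he with ⟨rfl, rfl⟩ | ⟨rfl, rfl⟩
    · exact ⟨p, q, ⟨hs, fun h => hne (h ▸ rfl)⟩, rfl, rfl⟩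
    · exact ⟨q, p, ⟨Sym2.eq_swap ▸ hs, fun h => hne (h ▸ rfl)⟩, rfl, rfl⟩

theorem map_deleteEdges (f : V ↪ W) (G : SimpleGraph V) (s : Set (Sym2 V)) :
    (G.deleteEdges s).map f = (G.map f).deleteEdges (f.sym2Map '' s) := by
  apply edgeSet_injective
  rw [edgeSet_map, edgeSet_deleteEdges, edgeSet_deleteEdges, Set.image_sdiff f.sym2Map.injective,
    edgeSet_map]

end Map

theorem ncard_sep_insert_insert {p : V → Prop} {S : Set V} {x y : V} (hS : S.Finite)
    (hx : x ∉ S) (hy : y ∉ S) (hxy : p x ↔ ¬ p y) :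
    {u ∈ insert x (insert y S) | p u}.ncard = {u ∈ S | p u}.ncard + 1 := by
  simp only [← Set.inter_ofPred_eq_sep]
  by_cases hpx : p x
  · rw [Set.insert_inter_of_mem (show x ∈ {a | p a} from hpx),
      Set.insert_inter_of_notMem (show y ∉ {a | p a} from hxy.1 hpx),
      Set.ncard_insert_of_notMem (fun h => hx h.1) (hS.inter_of_left _)]
  · rw [Set.insert_inter_of_notMem (show x ∉ {a | p a} from hpx),
      Set.insert_inter_of_mem (show y ∈ {a | p a} from not_not.1 (hpx ∘ hxy.2)),
      Set.ncard_insert_of_notMem (fun h => hy h.1) (hS.inter_of_left _)]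

namespace IsTetragonal

variable {T B : SimpleGraph V} {S : Set V}

theorem boundary_le (h : IsTetragonal T B S) : B ≤ T := by
  induction h with
  | base => exact le_rfl
  | extend _ _ _ _ _ _ _ _ _ _ _ _ ih => exact sup_le_sup ((deleteEdges_le _).trans ih) le_rfl

theorem mem_of_adj (h : IsTetragonal T B S) {u w : V} (huw : T.Adj u w) : u ∈ S := by
  induction h generalizing u w with
  | base =>
    simp only [fromEdgeSet_adj, Set.mem_insert_iff, Set.mem_singleton_iff, Sym2.eq_iff] at huw ⊢
    tauto
  | extend T B S a b x y h _ _ _ hab ih =>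
    have ha : a ∈ S := ih (h.boundary_le hab)
    have hb : b ∈ S := ih (h.boundary_le hab.symm)
    rcases huw with huw | huw
    · exact Set.mem_insert_of_mem _ (Set.mem_insert_of_mem _ (ih huw))
    · simp only [fromEdgeSet_adj, Set.mem_insert_iff, Set.mem_singleton_iff, Sym2.eq_iff]
        at huw ⊢
      aesop

theorem finite (h : IsTetragonal T B S) : S.Finite := by
  induction h with
  | base => exact Set.toFinite _
  | extend _ _ _ _ _ x y _ _ _ _ _ ih => exact (ih.insert y).insert x

theorem map {W : Type*} (h : IsTetragonal T B S) (f : V ↪ W) :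
    IsTetragonal (T.map f) (B.map f) (f '' S) := by
  induction h with
  | base a b c d hab hac had hbc hbd hcd =>
    simp only [map_fromEdgeSet, Set.image_insert_eq, Set.image_singleton,
      Function.Embedding.sym2Map_apply, Sym2.map_mk]
    exact .base _ _ _ _ (f.injective.ne hab) (f.injective.ne hac) (f.injective.ne had)
      (f.injective.ne hbc) (f.injective.ne hbd) (f.injective.ne hcd)
  | extend T B S a b x y h hx hy hxy hab ih =>
    simp only [map_sup, map_deleteEdges, map_fromEdgeSet, Set.image_insert_eq,
      Set.image_singleton, Function.Embedding.sym2Map_apply, Sym2.map_mk]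
    exact .extend _ _ _ _ _ _ _ ih (by simpa using hx) (by simpa using hy) (f.injective.ne hxy)
      (map_adj_apply.2 hab)

theorem two_mul_ncard_sep (h : IsTetragonal T B S) {p : V → Prop}
    (hp : ∀ u w, T.Adj u w → (p u ↔ ¬ p w)) : 2 * {u ∈ S | p u}.ncard = S.ncard := by
  induction h with
  | base a b c d hab hac had hbc hbd hcd =>
    have hadj : ∀ u w, s(u, w) ∈ ({s(a, b), s(b, c), s(c, d), s(d, a)} : Set (Sym2 V)) →
        u ≠ w → (p u ↔ ¬ p w) :=
      fun u w he hne => hp u w ((fromEdgeSet_adj _).2 ⟨he, hne⟩)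
    have hcd_sep := ncard_sep_insert_insert Set.finite_empty (Set.notMem_empty c)
      (Set.notMem_empty d) (hadj c d (by simp) hcd)
    rw [LawfulSingleton.insert_empty_eq, Set.sep_empty, Set.ncard_empty] at hcd_sep
    have ha : a ∉ ({c, d} : Set V) := by simp [hac, had]
    have hb : b ∉ ({c, d} : Set V) := by simp [hbc, hbd]
    rw [ncard_sep_insert_insert (Set.toFinite _) ha hb (hadj a b (by simp) hab), hcd_sep,
      Set.ncard_insert_of_notMem (by simp [hab, ha]), Set.ncard_insert_of_notMem hb,
      Set.ncard_pair hcd]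
  | extend T B S a b x y h hx hy hxy hab ih =>
    have hfin := h.finite
    have hx' : x ∉ insert y S := by simp [hx, hxy]
    have hpxy : p x ↔ ¬ p y := hp x y (Or.inr ((fromEdgeSet_adj _).2 ⟨by simp, hxy⟩))
    rw [ncard_sep_insert_insert hfin hx hy hpxy, Set.ncard_insert_of_notMem hx' (hfin.insert y),
      Set.ncard_insert_of_notMem hy hfin,
      ← ih fun u w huw => hp u w (Or.inl huw)]
    ring

end IsTetragonal

theorem IsTetragonalSubgraph.two_mul_ncard_sep_eq {G T B : SimpleGraph V} {S : Set V}
    (h : IsTetragonalSubgraph G T B S) (c : G.Coloring (Fin 2)) (i : Fin 2) :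
    2 * {u ∈ S | c u = i}.ncard = S.ncard :=
  h.1.two_mul_ncard_sep fun u w huw => by have := c.valid (h.2 huw); omega

theorem IsTetragonalSubgraph.two_mul_ncard_sep_ne {G T B : SimpleGraph V} {S : Set V}
    (h : IsTetragonalSubgraph G T B S) (c : G.Coloring (Fin 2)) (i : Fin 2) :
    2 * {u ∈ S | c u ≠ i}.ncard = S.ncard :=
  h.1.two_mul_ncard_sep fun u w huw => by have := c.valid (h.2 huw); omega

theorem Coloring.neighborSet_inter_subset {α : Type*} {G : SimpleGraph V} (c : G.Coloring α)
    (S : Set V) (v : V) : G.neighborSet v ∩ S ⊆ {u ∈ S | c u ≠ c v} :=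
  fun _ hu => ⟨hu.2, (c.valid hu.1).symm⟩

theorem ncard_edgeSet_induce (G : SimpleGraph V) (s : Set V) :
    (G.induce s).edgeSet.ncard = (G.edgeSet ∩ s.sym2).ncard := by
  rw [← Set.ncard_image_of_injective _ (Function.Embedding.subtype (· ∈ s)).sym2Map.injective]
  congr 1
  ext e
  induction e using Sym2.ind with | _ u w =>
  simp only [Set.mem_image, Set.mem_inter_iff, mem_edgeSet, Set.mk_mem_sym2_iff]
  constructor
  · rintro ⟨e, he, hmap⟩
    induction e using Sym2.ind with | _ u' w' =>
    rcases Sym2.eq_iff.1 hmap with ⟨rfl, rfl⟩ | ⟨rfl, rfl⟩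
    · exact ⟨he, u'.2, w'.2⟩
    · exact ⟨he.symm, w'.2, u'.2⟩
  · rintro ⟨h, hu, hw⟩
    exact ⟨s(⟨u, hu⟩, ⟨w, hw⟩), h, rfl⟩

theorem ncard_edgeSet_induce_insert {G : SimpleGraph V} {R : Set V} {z : V} (hR : R.Finite)
    (hz : z ∉ R) :
    (G.induce (insert z R)).edgeSet.ncard
      = (G.induce R).edgeSet.ncard + (G.neighborSet z ∩ R).ncard := by
  have hsplit : G.edgeSet ∩ (insert z R).sym2
      = G.edgeSet ∩ R.sym2 ∪ (fun w => s(z, w)) '' (G.neighborSet z ∩ R) := by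
    ext e
    induction e using Sym2.ind with | _ u w =>
    simp only [Set.mem_inter_iff, Set.mem_union, Set.mem_image, mem_edgeSet, mem_neighborSet,
      Set.mk_mem_sym2_iff, Set.mem_insert_iff]
    constructor
    · rintro ⟨h, rfl | hu, rfl | hw⟩
      · exact (h.ne rfl).elim
      · exact .inr ⟨w, ⟨h, hw⟩, rfl⟩
      · exact .inr ⟨u, ⟨h.symm, hu⟩, Sym2.eq_swap⟩
      · exact .inl ⟨h, hu, hw⟩
    · rintro (⟨h, hu, hw⟩ | ⟨x, ⟨h, hx⟩, he⟩)
      · exact ⟨h, .inr hu, .inr hw⟩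
      · rcases Sym2.eq_iff.1 he with ⟨rfl, rfl⟩ | ⟨rfl, rfl⟩
        · exact ⟨h, .inl rfl, .inr hx⟩
        · exact ⟨h.symm, .inr hx, .inl rfl⟩
  have hdisj : Disjoint (G.edgeSet ∩ R.sym2) ((fun w => s(z, w)) '' (G.neighborSet z ∩ R)) := by
    rw [Set.disjoint_left]
    rintro _ ⟨-, he⟩ ⟨x, -, rfl⟩
    exact hz he.1
  have hRsym : R.sym2.Finite := Set.sym2_eq_mk_image (s := R) ▸ (hR.prod hR).image _
  rw [ncard_edgeSet_induce, ncard_edgeSet_induce, hsplit, Set.ncard_union_eq hdisj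
      (hRsym.inter_of_right _) ((hR.inter_of_right _).image _),
    Set.ncard_image_of_injective _ fun _ _ => Sym2.congr_right.1]

theorem nonempty_iso_completeBipartiteGraph {W : Type*} [Finite W] {H : SimpleGraph W}
    (p : W → Prop) (hadj : ∀ u w, H.Adj u w ↔ (p u ↔ ¬ p w)) {m : ℕ}
    (hp : Nat.card {w // p w} = m) (hnp : Nat.card {w // ¬ p w} = m) :
    Nonempty (H ≃g completeBipartiteGraph (Fin m) (Fin m)) := by
  classical
  let split : H ≃g completeBipartiteGraph {w // p w} {w // ¬ p w} :=
    { toEquiv := (Equiv.sumCompl p).symm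
      map_rel_iff' := fun {u w} => by
        by_cases hu : p u <;> by_cases hw : p w <;>
          simp [Equiv.sumCompl_symm_apply_of_pos, Equiv.sumCompl_symm_apply_of_neg, hu, hw, hadj] }
  exact ⟨split.trans (completeBipartiteGraphCongr (Finite.equivFinOfCardEq hp)
    (Finite.equivFinOfCardEq hnp))⟩

theorem nonempty_induce_iso_completeBipartiteGraph {G : SimpleGraph V} {S : Set V}
    (hS : S.Finite) (p : V → Prop)
    (hadj : ∀ u ∈ S, ∀ w ∈ S, G.Adj u w ↔ (p u ↔ ¬ p w)) {m : ℕ}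
    (hp : {u ∈ S | p u}.ncard = m) (hnp : {u ∈ S | ¬ p u}.ncard = m) :
    Nonempty (G.induce S ≃g completeBipartiteGraph (Fin m) (Fin m)) := by
  have := hS.to_subtype
  refine nonempty_iso_completeBipartiteGraph (fun u : S => p u) (fun u w => hadj u u.2 w w.2)
    ?_ ?_
  · rw [← hp, ← Nat.card_coe_set_eq]
    exact Nat.card_congr (Equiv.subtypeSubtypeEquivSubtypeInter (· ∈ S) p)
  · rw [← hnp, ← Nat.card_coe_set_eq]
    exact Nat.card_congr (Equiv.subtypeSubtypeEquivSubtypeInter (· ∈ S) (¬ p ·))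

theorem map_swap_le [DecidableEq V] {G T : SimpleGraph V} {y v : V} (hTG : T ≤ G)
    (hv : ∀ u, ¬ T.Adj v u) (hN : ∀ w, T.Adj y w → G.Adj v w) :
    T.map (Equiv.swap y v).toEmbedding ≤ G := by
  rintro _ _ ⟨-, p, q, hpq, rfl, rfl⟩
  have hp : p ≠ v := by rintro rfl; exact hv q hpq
  have hq : q ≠ v := by rintro rfl; exact hv p hpq.symm
  simp only [Equiv.coe_toEmbedding, Equiv.swap_apply_def, hp, hq, if_false]
  split_ifs with hpy hqy hqy
  · exact (hpq.ne (hpy.trans hqy.symm)).elim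
  · exact hN q (hpy ▸ hpq)
  · exact (hN p (hqy ▸ hpq.symm)).symm
  · exact hTG hpq

theorem IsOptimalTetragonal.ncard_neighborSet_le {G T B : SimpleGraph V} {S : Set V}
    (hopt : IsOptimalTetragonal G T B S) {y v : V} (hy : y ∈ S) (hv : v ∉ S)
    (hN : ∀ w, T.Adj y w → G.Adj v w) :
    (G.neighborSet v ∩ (S \ {y})).ncard ≤ (G.neighborSet y ∩ S).ncard := by
  classical
  obtain ⟨⟨hT, hTG⟩, -, hedges⟩ := hopt
  let σ := (Equiv.swap y v).toEmbedding
  have hsub : IsTetragonalSubgraph G (T.map σ) (B.map σ) (σ '' S) :=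
    ⟨hT.map σ, map_swap_le hTG (fun u huv => hv (hT.mem_of_adj huv)) hN⟩
  have himage : σ '' S = insert v (S \ {y}) := by
    rw [Equiv.coe_toEmbedding, Equiv.image_swap_of_mem_of_notMem hy hv,
      Set.insert_sdiff_singleton_comm (ne_of_mem_of_not_mem hy hv).symm]
  have hR : (S \ {y}).Finite := hT.finite.sdiff
  have hswap := hedges _ _ _ hsub (Set.ncard_image_of_injective _ σ.injective)
  have hS := ncard_edgeSet_induce_insert (G := G) hR (fun h => h.2 rfl : y ∉ S \ {y})
  rw [Set.insert_sdiff_self_of_mem hy] at hS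
  rw [himage, ncard_edgeSet_induce_insert hR (fun h => hv h.1), hS] at hswap
  calc (G.neighborSet v ∩ (S \ {y})).ncard ≤ (G.neighborSet y ∩ (S \ {y})).ncard := by omega
    _ ≤ (G.neighborSet y ∩ S).ncard :=
      Set.ncard_le_ncard (Set.inter_subset_inter_right _ Set.sdiff_subset)
        (hT.finite.inter_of_right _)

theorem IsOptimalTetragonal.ncard_neighborSet_le_of_coloring {G T B : SimpleGraph V}
    {S : Set V} (hopt : IsOptimalTetragonal G T B S) (c : G.Coloring (Fin 2)) {v : V} (hv : v ∉ S)
    (hvS : ∀ w ∈ S, c w ≠ c v → G.Adj v w) {y : V} (hy : y ∈ S) (hyv : c y = c v) :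
    (G.neighborSet v ∩ S).ncard ≤ (G.neighborSet y ∩ S).ncard := by
  have hN (w : V) (hw : T.Adj y w) : G.Adj v w :=
    hvS w (hopt.1.1.mem_of_adj hw.symm) (hyv ▸ (c.valid (hopt.1.2 hw)).symm)
  have hvy : G.neighborSet v ∩ (S \ {y}) = G.neighborSet v ∩ S := by
    rw [← Set.inter_sdiff_assoc, Set.sdiff_singleton_eq_self fun h => c.valid h.1 hyv.symm]
  exact hvy ▸ hopt.ncard_neighborSet_le hy hv hN

theorem optimal_tetragonal_degree_general {V : Type*} (G T B : SimpleGraph V) (S : Set V)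
    (m : ℕ) (hbip : G.Colorable 2) (hopt : IsOptimalTetragonal G T B S)
    (hcard : S.ncard = 2 * m) :
    (∀ v : V, v ∉ S → (G.neighborSet v ∩ S).ncard ≤ m) ∧
    (∀ v : V, v ∉ S → (G.neighborSet v ∩ S).ncard = m →
      Nonempty ((G.induce S) ≃g completeBipartiteGraph (Fin m) (Fin m))) := by
  obtain ⟨c⟩ := hbip
  have hfin := hopt.1.1.finite
  have hsame (v : V) : {u ∈ S | c u = c v}.ncard = m := by
    have := hopt.1.two_mul_ncard_sep_eq c (c v); omega
  have hother (v : V) : {u ∈ S | c u ≠ c v}.ncard = m := by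
    have := hopt.1.two_mul_ncard_sep_ne c (c v); omega
  have hsub (v : V) := Coloring.neighborSet_inter_subset c S v
  have hfull (v : V) (h : m ≤ (G.neighborSet v ∩ S).ncard) (w : V) (hw : w ∈ S)
      (hwv : c w ≠ c v) : G.Adj v w :=
    have hN := Set.eq_of_subset_of_ncard_le (hsub v) (hother v ▸ h) (hfin.sep _)
    (hN ▸ ⟨hw, hwv⟩ : w ∈ G.neighborSet v ∩ S).1
  refine ⟨fun v _ => hother v ▸ Set.ncard_le_ncard (hsub v) (hfin.sep _), fun v hv hdeg => ?_⟩
  have hcomplete (y : V) (hy : y ∈ S) (hyv : c y = c v) (w : V) (hw : w ∈ S)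
      (hwv : c w ≠ c v) : G.Adj y w :=
    hfull y (hdeg ▸ hopt.ncard_neighborSet_le_of_coloring c hv (hfull v hdeg.ge) hy hyv) w hw
      (hyv ▸ hwv)
  refine nonempty_induce_iso_completeBipartiteGraph hfin (c · = c v) (fun u hu w hw => ?_)
    (hsame v) (hother v)
  refine ⟨fun h => by have := c.valid h; omega, fun h => ?_⟩
  by_cases huv : c u = c v
  · exact hcomplete u hu huv w hw (h.1 huv)
  · exact (hcomplete w hw (by tauto) u hu huv).symm

/-- Lemma 3.7 (1): degrees into an optimal tetragonal subgraph of a bipartite graph. -/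
theorem optimal_tetragonal_degree {V : Type*} [Fintype V] (G T B : SimpleGraph V) (S : Set V)
    (m : ℕ) (hbip : G.Colorable 2) (hopt : IsOptimalTetragonal G T B S)
    (hcard : S.ncard = 2 * m) (hm : 3 ≤ m) :
    (∀ v : V, v ∉ S → (G.neighborSet v ∩ S).ncard ≤ m) ∧
    (∀ v : V, v ∉ S → (G.neighborSet v ∩ S).ncard = m →
      Nonempty ((G.induce S) ≃g completeBipartiteGraph (Fin m) (Fin m))) :=
  optimal_tetragonal_degree_general G T B S m hbip hopt hcard

end Dean
end

section
/- Let G be a finite simple bipartite graph and let T be an optimal tetragonal subgraph of G with |V(T)| = 2m ≥ 6. Then the set R := {v ∈ V(G) \ V(T) : v has at least m − 1 neighbors in V(T)} is an independent set in G. -/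
open SimpleGraph

namespace Dean

variable {V : Type*}

private lemma cyc4_nbr {a b c d : V} (hab : a ≠ b) (hac : a ≠ c) (had : a ≠ d) :
    (SimpleGraph.fromEdgeSet {s(a, b), s(b, c), s(c, d), s(d, a)} :
      SimpleGraph V).neighborSet a = {b, d} := by
  ext u
  simp only [SimpleGraph.mem_neighborSet, SimpleGraph.fromEdgeSet_adj, Set.mem_insert_iff,
    Set.mem_singleton_iff, Sym2.eq_iff]
  constructor
  · rintro ⟨h', -⟩; tauto
  · rintro (rfl | rfl) <;> simp [hab, hac, had]

private lemma cyc4_rot {a b c d : V} :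
    ({s(a, b), s(b, c), s(c, d), s(d, a)} : Set (Sym2 V))
      = {s(b, c), s(c, d), s(d, a), s(a, b)} := by
  ext e
  simp only [Set.mem_insert_iff, Set.mem_singleton_iff]
  tauto

lemma tetra_struct [Fintype V] {T B : SimpleGraph V} {S : Set V} (h : IsTetragonal T B S) :
    B ≤ T ∧ (∀ u v, B.Adj u v → u ∈ S ∧ v ∈ S) ∧ ∀ v ∈ S, (B.neighborSet v).ncard = 2 := by
  induction h with
  | base a b c d hab hac had hbc hbd hcd =>
    refine ⟨le_refl _, ?_, ?_⟩
    · intro u v huv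
      rw [SimpleGraph.fromEdgeSet_adj] at huv
      obtain ⟨hmem, -⟩ := huv
      simp only [Set.mem_insert_iff, Set.mem_singleton_iff, Sym2.eq_iff] at hmem ⊢
      tauto
    · intro v hv
      rcases hv with rfl | rfl | rfl | rfl
      · rw [cyc4_nbr hab hac had]; exact Set.ncard_pair hbd
      · rw [cyc4_rot, cyc4_nbr hbc hbd (Ne.symm hab)]; exact Set.ncard_pair (Ne.symm hac)
      · rw [cyc4_rot, cyc4_rot, cyc4_nbr hcd (Ne.symm hac) (Ne.symm hbc)]
        exact Set.ncard_pair (Ne.symm hbd)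
      · rw [cyc4_rot, cyc4_rot, cyc4_rot, cyc4_nbr (Ne.symm had) (Ne.symm hbd) (Ne.symm hcd)]
        exact Set.ncard_pair hac
  | extend T B S a b x y h hx hy hxy hab ih =>
    obtain ⟨ihBT, ihsupp, ihdeg⟩ := ih
    have hSa : a ∈ S := (ihsupp a b hab).1
    have hSb : b ∈ S := (ihsupp a b hab).2
    have hab' : a ≠ b := hab.ne
    have hba : b ≠ a := Ne.symm hab'
    have hax : a ≠ x := fun e => hx (e ▸ hSa)
    have hay : a ≠ y := fun e => hy (e ▸ hSa)
    have hbx : b ≠ x := fun e => hx (e ▸ hSb)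
    have hby : b ≠ y := fun e => hy (e ▸ hSb)
    have hxa : x ≠ a := Ne.symm hax
    have hya : y ≠ a := Ne.symm hay
    have hxb : x ≠ b := Ne.symm hbx
    have hyb : y ≠ b := Ne.symm hby
    have hyx : y ≠ x := Ne.symm hxy
    refine ⟨?_, ?_, ?_⟩
    · intro u v huv
      rcases huv with ⟨hB, -⟩ | hnew
      · exact Or.inl (ihBT hB)
      · exact Or.inr hnew
    · intro u v huv
      rcases huv with ⟨hB, -⟩ | hnew
      · obtain ⟨h1, h2⟩ := ihsupp u v hB
        exact ⟨Or.inr (Or.inr h1), Or.inr (Or.inr h2)⟩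
      · rw [SimpleGraph.fromEdgeSet_adj] at hnew
        obtain ⟨hmem, -⟩ := hnew
        simp only [Set.mem_insert_iff, Set.mem_singleton_iff, Sym2.eq_iff] at hmem
        rcases hmem with (⟨rfl,rfl⟩|⟨rfl,rfl⟩)|(⟨rfl,rfl⟩|⟨rfl,rfl⟩)|(⟨rfl,rfl⟩|⟨rfl,rfl⟩) <;>
          simp [hSa, hSb]
    · have hNx : (B.deleteEdges {s(a, b)} ⊔
          SimpleGraph.fromEdgeSet {s(a, x), s(x, y), s(y, b)}).neighborSet x = {a, y} := by
        ext u
        simp only [SimpleGraph.mem_neighborSet, SimpleGraph.sup_adj,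
          SimpleGraph.deleteEdges_adj, SimpleGraph.fromEdgeSet_adj, Set.mem_insert_iff,
          Set.mem_singleton_iff, Sym2.eq_iff]
        constructor
        · rintro (⟨hB, -⟩ | ⟨h', -⟩)
          · exact absurd ((ihsupp x u hB).1) hx
          · tauto
        · rintro (rfl | rfl) <;> simp [hxa, hxy, hxb, hax]
      have hNy : (B.deleteEdges {s(a, b)} ⊔
          SimpleGraph.fromEdgeSet {s(a, x), s(x, y), s(y, b)}).neighborSet y = {x, b} := by
        ext u
        simp only [SimpleGraph.mem_neighborSet, SimpleGraph.sup_adj,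
          SimpleGraph.deleteEdges_adj, SimpleGraph.fromEdgeSet_adj, Set.mem_insert_iff,
          Set.mem_singleton_iff, Sym2.eq_iff]
        constructor
        · rintro (⟨hB, -⟩ | ⟨h', -⟩)
          · exact absurd ((ihsupp y u hB).1) hy
          · tauto
        · rintro (rfl | rfl) <;> simp [hya, hyx, hyb, hay, hby, hxy]
      have hNa : (B.deleteEdges {s(a, b)} ⊔
          SimpleGraph.fromEdgeSet {s(a, x), s(x, y), s(y, b)}).neighborSet a
          = insert x (B.neighborSet a \ {b}) := by
        ext u
        simp only [SimpleGraph.mem_neighborSet, SimpleGraph.sup_adj,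
          SimpleGraph.deleteEdges_adj, SimpleGraph.fromEdgeSet_adj, Set.mem_insert_iff,
          Set.mem_singleton_iff, Sym2.eq_iff, Set.mem_diff]
        constructor
        · rintro (⟨hB, hne⟩ | ⟨h', -⟩) <;> tauto
        · rintro (rfl | ⟨hB, hne⟩)
          · simp [hax, hay, hab']
          · exact Or.inl ⟨hB, by tauto⟩
      have hNb : (B.deleteEdges {s(a, b)} ⊔
          SimpleGraph.fromEdgeSet {s(a, x), s(x, y), s(y, b)}).neighborSet b
          = insert y (B.neighborSet b \ {a}) := by
        ext u
        simp only [SimpleGraph.mem_neighborSet, SimpleGraph.sup_adj,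
          SimpleGraph.deleteEdges_adj, SimpleGraph.fromEdgeSet_adj, Set.mem_insert_iff,
          Set.mem_singleton_iff, Sym2.eq_iff, Set.mem_diff]
        constructor
        · rintro (⟨hB, hne⟩ | ⟨h', -⟩) <;> tauto
        · rintro (rfl | ⟨hB, hne⟩)
          · simp [hba, hbx, hby]
          · exact Or.inl ⟨hB, by tauto⟩
      intro v hv
      rcases hv with rfl | rfl | hvS
      · rw [hNx]; exact Set.ncard_pair hay
      · rw [hNy]; exact Set.ncard_pair hxb
      · by_cases hva : v = a
        · subst hva
          rw [hNa]
          have hbmem : b ∈ B.neighborSet v := hab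
          have hxnot : x ∉ B.neighborSet v \ {b} := fun hmem => hx ((ihsupp v x hmem.1).2)
          rw [Set.ncard_insert_of_notMem hxnot,
            Set.ncard_diff_singleton_of_mem hbmem, ihdeg v hvS]
        · by_cases hvb : v = b
          · subst hvb
            rw [hNb]
            have hamem : a ∈ B.neighborSet v := hab.symm
            have hynot : y ∉ B.neighborSet v \ {a} := fun hmem => hy ((ihsupp v y hmem.1).2)
            rw [Set.ncard_insert_of_notMem hynot,
              Set.ncard_diff_singleton_of_mem hamem, ihdeg v hvS]
          · have hvx : v ≠ x := fun e => hx (e ▸ hvS)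
            have hvy : v ≠ y := fun e => hy (e ▸ hvS)
            have hNv : (B.deleteEdges {s(a, b)} ⊔
                SimpleGraph.fromEdgeSet {s(a, x), s(x, y), s(y, b)}).neighborSet v
                = B.neighborSet v := by
              ext u
              simp only [SimpleGraph.mem_neighborSet, SimpleGraph.sup_adj,
                SimpleGraph.deleteEdges_adj, SimpleGraph.fromEdgeSet_adj, Set.mem_insert_iff,
                Set.mem_singleton_iff, Sym2.eq_iff]
              constructor
              · rintro (⟨hB, -⟩ | ⟨h', -⟩)
                · exact hB
                · tauto
              · intro hB
                refine Or.inl ⟨hB, ?_⟩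
                tauto
            rw [hNv]; exact ihdeg v hvS

lemma tetra_balance [Fintype V] {T B : SimpleGraph V} {S : Set V} (h : IsTetragonal T B S)
    (c : V → Fin 2) (hc : ∀ u v, T.Adj u v → c u ≠ c v) :
    {v ∈ S | c v = 0}.ncard = {v ∈ S | c v = 1}.ncard := by
  have fin2 : ∀ j k : Fin 2, k ≠ j → ∀ i : Fin 2, i ≠ j → k = i := by decide
  induction h with
  | base a b c' d hab hac had hbc hbd hcd =>
    have hTab : (SimpleGraph.fromEdgeSet {s(a, b), s(b, c'), s(c', d), s(d, a)} :
        SimpleGraph V).Adj a b := by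
      rw [SimpleGraph.fromEdgeSet_adj]; exact ⟨by simp, hab⟩
    have hTbc : (SimpleGraph.fromEdgeSet {s(a, b), s(b, c'), s(c', d), s(d, a)} :
        SimpleGraph V).Adj b c' := by
      rw [SimpleGraph.fromEdgeSet_adj]; exact ⟨by simp, hbc⟩
    have hTcd : (SimpleGraph.fromEdgeSet {s(a, b), s(b, c'), s(c', d), s(d, a)} :
        SimpleGraph V).Adj c' d := by
      rw [SimpleGraph.fromEdgeSet_adj]; exact ⟨by simp, hcd⟩
    have h1 : c a ≠ c b := hc _ _ hTab
    have h2 : c c' = c a := fin2 _ _ (Ne.symm (hc _ _ hTbc)) _ h1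
    have h3 : c d = c b := by
      refine fin2 _ _ ?_ _ (Ne.symm h1)
      rw [← h2]; exact Ne.symm (hc _ _ hTcd)
    have hset0 : ∀ i : Fin 2, c a = i →
        {v ∈ ({a, b, c', d} : Set V) | c v = i} = {a, c'} := by
      intro i hi
      ext v
      simp only [Set.mem_setOf_eq, Set.mem_insert_iff, Set.mem_singleton_iff]
      constructor
      · rintro ⟨rfl | rfl | rfl | rfl, hcv⟩
        · exact Or.inl rfl
        · exact absurd (hi.trans hcv.symm) h1
        · exact Or.inr rfl
        · exact absurd (hi.trans (h3.symm.trans hcv).symm) h1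
      · rintro (rfl | rfl)
        · exact ⟨Or.inl rfl, hi⟩
        · exact ⟨Or.inr (Or.inr (Or.inl rfl)), h2.trans hi⟩
    have hset1 : ∀ i : Fin 2, c b = i →
        {v ∈ ({a, b, c', d} : Set V) | c v = i} = {b, d} := by
      intro i hi
      ext v
      simp only [Set.mem_setOf_eq, Set.mem_insert_iff, Set.mem_singleton_iff]
      constructor
      · rintro ⟨rfl | rfl | rfl | rfl, hcv⟩
        · exact absurd (hcv.trans hi.symm) h1
        · exact Or.inl rfl
        · exact absurd ((h2.symm.trans hcv).trans hi.symm) h1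
        · exact Or.inr rfl
      · rintro (rfl | rfl)
        · exact ⟨Or.inr (Or.inl rfl), hi⟩
        · exact ⟨Or.inr (Or.inr (Or.inr rfl)), h3.trans hi⟩
    rcases (by decide : ∀ k : Fin 2, k = 0 ∨ k = 1) (c a) with h0 | h0
    · have hb1 : c b = 1 := fin2 _ _ (fun e => h1 (h0.trans e.symm)) _ (by decide)
      rw [hset0 0 h0, hset1 1 hb1, Set.ncard_pair hac, Set.ncard_pair hbd]
    · have hb1 : c b = 0 := fin2 _ _ (fun e => h1 (h0.trans e.symm)) _ (by decide)
      rw [hset0 1 h0, hset1 0 hb1, Set.ncard_pair hac, Set.ncard_pair hbd]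
  | extend T B S a b x y h hx hy hxy hab ih =>
    have hcT : ∀ u v, T.Adj u v → c u ≠ c v := fun u v huv => hc u v (Or.inl huv)
    have ihq := ih hcT
    have hTxy : (T ⊔ SimpleGraph.fromEdgeSet {s(a, x), s(x, y), s(y, b)}).Adj x y := by
      refine Or.inr ?_
      rw [SimpleGraph.fromEdgeSet_adj]
      exact ⟨by simp, hxy⟩
    have hcxy : c x ≠ c y := hc _ _ hTxy
    have key : ∀ i j : Fin 2, c x = i → c y = j →
        {v ∈ insert x (insert y S) | c v = i} = insert x {v ∈ S | c v = i} ∧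
        {v ∈ insert x (insert y S) | c v = j} = insert y {v ∈ S | c v = j} := by
      intro i j hix hjy
      have hij : i ≠ j := hix ▸ hjy ▸ hcxy
      constructor
      · ext v
        simp only [Set.mem_setOf_eq, Set.mem_insert_iff]
        constructor
        · rintro ⟨rfl | rfl | hvS, hcv⟩
          · exact Or.inl rfl
          · exact absurd (hjy.symm.trans hcv) (Ne.symm hij)
          · exact Or.inr ⟨hvS, hcv⟩
        · rintro (rfl | ⟨hvS, hcv⟩)
          · exact ⟨Or.inl rfl, hix⟩
          · exact ⟨Or.inr (Or.inr hvS), hcv⟩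
      · ext v
        simp only [Set.mem_setOf_eq, Set.mem_insert_iff]
        constructor
        · rintro ⟨rfl | rfl | hvS, hcv⟩
          · exact absurd (hix.symm.trans hcv) hij
          · exact Or.inl rfl
          · exact Or.inr ⟨hvS, hcv⟩
        · rintro (rfl | ⟨hvS, hcv⟩)
          · exact ⟨Or.inr (Or.inl rfl), hjy⟩
          · exact ⟨Or.inr (Or.inr hvS), hcv⟩
    have hxnot : ∀ i : Fin 2, x ∉ {v ∈ S | c v = i} := fun i hmem => hx hmem.1
    have hynot : ∀ i : Fin 2, y ∉ {v ∈ S | c v = i} := fun i hmem => hy hmem.1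
    rcases (by decide : ∀ k : Fin 2, k = 0 ∨ k = 1) (c x) with h0 | h0
    · have hy1 : c y = 1 := fin2 _ _ (fun e => hcxy (h0.trans e.symm)) _ (by decide)
      obtain ⟨e0, e1⟩ := key 0 1 h0 hy1
      rw [e0, e1, Set.ncard_insert_of_notMem (hxnot 0),
        Set.ncard_insert_of_notMem (hynot 1), ihq]
    · have hy1 : c y = 0 := fin2 _ _ (fun e => hcxy (h0.trans e.symm)) _ (by decide)
      obtain ⟨e0, e1⟩ := key 1 0 h0 hy1
      rw [e1, e0, Set.ncard_insert_of_notMem (hynot 0),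
        Set.ncard_insert_of_notMem (hxnot 1), ihq]


/-- Lemma 3.7 (2): the set `R` of high-degree outside vertices is independent. -/
theorem optimal_tetragonal_R_independent {V : Type*} [Fintype V]
    (G T B : SimpleGraph V) (S : Set V) (m : ℕ)
    (hbip : G.Colorable 2) (hopt : IsOptimalTetragonal G T B S)
    (hcard : S.ncard = 2 * m) (hm : 3 ≤ m) :
    ∀ p q : V, p ∉ S → q ∉ S →
      m - 1 ≤ (G.neighborSet p ∩ S).ncard → m - 1 ≤ (G.neighborSet q ∩ S).ncard →
      ¬ G.Adj p q := by
  intro p q hp hq hdp hdq hadj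
  obtain ⟨⟨htet, hle⟩, hmax, -⟩ := hopt
  obtain ⟨hBT, hsupp, hdeg⟩ := tetra_struct htet
  obtain ⟨c⟩ := hbip
  have hcol : ∀ u v, G.Adj u v → c u ≠ c v := fun u v h => c.valid h
  have fin2 : ∀ j k : Fin 2, k ≠ j → ∀ i : Fin 2, i ≠ j → k = i := by decide
  have hpq : c p ≠ c q := hcol _ _ hadj
  have hbal := tetra_balance htet (⇑c) (fun u v h => hcol u v (hle h))
  have hdisj : Disjoint {v ∈ S | c v = 0} {v ∈ S | c v = 1} := by
    rw [Set.disjoint_left]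
    rintro v ⟨-, h0⟩ ⟨-, h1⟩
    rw [h0] at h1
    exact absurd h1 (by decide)
  have hunion : {v ∈ S | c v = 0} ∪ {v ∈ S | c v = 1} = S := by
    ext v
    simp only [Set.mem_union, Set.mem_setOf_eq]
    constructor
    · rintro (⟨h, -⟩ | ⟨h, -⟩) <;> exact h
    · intro h
      rcases (by decide : ∀ k : Fin 2, k = 0 ∨ k = 1) (c v) with h0 | h0
      · exact Or.inl ⟨h, h0⟩
      · exact Or.inr ⟨h, h0⟩
  have hsum : {v ∈ S | c v = 0}.ncard + {v ∈ S | c v = 1}.ncard = 2 * m := by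
    rw [← Set.ncard_union_eq hdisj, hunion, hcard]
  have hm0 : {v ∈ S | c v = 0}.ncard = m := by omega
  have hm1 : {v ∈ S | c v = 1}.ncard = m := by omega
  have hXp : {v ∈ S | c v = c p}.ncard = m := by
    rcases (by decide : ∀ k : Fin 2, k = 0 ∨ k = 1) (c p) with h0 | h0 <;> rw [h0]
    · exact hm0
    · exact hm1
  have hBqXp : G.neighborSet q ∩ S ⊆ {v ∈ S | c v = c p} := by
    rintro v ⟨hv1, hv2⟩
    exact ⟨hv2, fin2 _ _ (Ne.symm (hcol _ _ hv1)) _ hpq⟩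
  have hZ : ({v ∈ S | c v = c p} \ (G.neighborSet q ∩ S)).ncard ≤ 1 := by
    rw [Set.ncard_diff hBqXp, hXp]
    omega
  by_cases hgood : ∃ a b', B.Adj a b' ∧ a ∈ G.neighborSet p ∩ S ∧ b' ∈ G.neighborSet q ∩ S
  · obtain ⟨a, b', hBab, haA, hbB⟩ := hgood
    have h1 : G.Adj p a := haA.1
    have h2 : G.Adj q b' := hbB.1
    have hT'le : T ⊔ SimpleGraph.fromEdgeSet {s(a, p), s(p, q), s(q, b')} ≤ G := by
      refine sup_le hle ?_
      intro u v huv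
      rw [SimpleGraph.fromEdgeSet_adj] at huv
      obtain ⟨hmem, -⟩ := huv
      simp only [Set.mem_insert_iff, Set.mem_singleton_iff, Sym2.eq_iff] at hmem
      rcases hmem with (⟨rfl,rfl⟩|⟨rfl,rfl⟩)|(⟨rfl,rfl⟩|⟨rfl,rfl⟩)|(⟨rfl,rfl⟩|⟨rfl,rfl⟩)
      · exact h1.symm
      · exact h1
      · exact hadj
      · exact hadj.symm
      · exact h2
      · exact h2.symm
    have htet' := IsTetragonal.extend T B S a b' p q htet hp hq hadj.ne hBab
    have hle2 := hmax _ _ _ ⟨htet', hT'le⟩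
    have hq1 : (insert q S).ncard = S.ncard + 1 := Set.ncard_insert_of_notMem hq
    have hp1 : p ∉ insert q S := by
      intro hmem
      rcases hmem with rfl | hmem
      · exact hadj.ne rfl
      · exact hp hmem
    rw [Set.ncard_insert_of_notMem hp1, hq1, hcard] at hle2
    omega
  · push_neg at hgood
    have hApos : (G.neighborSet p ∩ S).Nonempty := by
      apply Set.nonempty_of_ncard_ne_zero
      omega
    obtain ⟨a, haA⟩ := hApos
    have hca : c a = c q := fin2 _ _ (Ne.symm (hcol _ _ haA.1)) _ (Ne.symm hpq)
    have hNsub : B.neighborSet a ⊆ {v ∈ S | c v = c p} \ (G.neighborSet q ∩ S) := by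
      intro n hn
      have hGan : G.Adj a n := hle (hBT hn)
      have hnS : n ∈ S := (hsupp a n hn).2
      have hcn : c n = c p := by
        refine fin2 _ _ ?_ _ hpq
        rw [← hca]
        exact Ne.symm (hcol _ _ hGan)
      refine ⟨⟨hnS, hcn⟩, ?_⟩
      intro hmem
      exact hgood a n hn haA hmem
    have hle3 := Set.ncard_le_ncard hNsub (Set.toFinite _)
    rw [hdeg a haA.2] at hle3
    omega


end Dean
end
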